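/- arXiv:2207.06266 — 7 statements merged into one kernel-verified Lean document; each statement's English description precedes it below -/
import Mathlib

section
/- A pseudo-monomial f in F2[x_1,...,x_n] lies in the neural ideal J_C if and only if f(c) = 0 for every codeword c ∈ C, where evaluation at c ⊆ [n] sets x_i = 1 if i ∈ c and x_i = 0 otherwise. -/
open MvPolynomial

noncomputable section

abbrev PM (n : ℕ) := MvPolynomial (Fin n) (ZMod 2)

/-- A pseudo-monomial in `F₂[x₁,…,xₙ]`. -/
def IsPseudoMonomial {n : ℕ} (f : PM n) : Prop :=
  ∃ σ τ : Finset (Fin n), Disjoint σ τ ∧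
    f = (∏ i ∈ σ, X i) * ∏ j ∈ τ, (1 - X j)

/-- The indicator pseudo-monomial `ρ_σ`. -/
def rho {n : ℕ} (σ : Finset (Fin n)) : PM n :=
  (∏ i ∈ σ, X i) * ∏ j ∈ σᶜ, (1 - X j)

/-- The neural ideal of a code. -/
def neuralIdeal {n : ℕ} (C : Set (Finset (Fin n))) : Ideal (PM n) :=
  Ideal.span {f | ∃ σ ∉ C, f = rho σ}

/-- The canonical form: minimal (under divisibility) pseudo-monomials in the neural ideal. -/
def CF {n : ℕ} (C : Set (Finset (Fin n))) : Set (PM n) :=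
  {f | IsPseudoMonomial f ∧ f ∈ neuralIdeal C ∧
    ∀ g, IsPseudoMonomial g → g ∈ neuralIdeal C → g ∣ f → g = f}

/-- Evaluation of a polynomial at a codeword. -/
def evalAt {n : ℕ} (c : Finset (Fin n)) (f : PM n) : ZMod 2 :=
  MvPolynomial.eval (fun i => if i ∈ c then 1 else 0) f

/-- The standing conventions on codes. -/
def GoodCode {n : ℕ} (C : Set (Finset (Fin n))) : Prop :=
  ∅ ∈ C ∧ (∀ i : Fin n, ∃ c ∈ C, i ∈ c) ∧
    ∀ i j : Fin n, i ≠ j → ¬(∀ c ∈ C, i ∈ c ↔ j ∈ c)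

/-- The interval `[σ,τ]`. -/
def Icc' {n : ℕ} (σ τ : Finset (Fin n)) : Set (Finset (Fin n)) :=
  {γ | σ ⊆ γ ∧ γ ⊆ τ}

/-- The deletion of a neuron from a code (keeping the ambient index set). -/
def del {n : ℕ} (C : Set (Finset (Fin n))) (i : Fin n) : Set (Finset (Fin n)) :=
  (fun c => c.erase i) '' C

/-- The deletion of the last neuron, as a code on `Fin n`. -/
def delLast {n : ℕ} (C : Set (Finset (Fin (n + 1)))) : Set (Finset (Fin n)) :=
  {d | ∃ c ∈ C, d.map Fin.castSuccEmb = c.erase (Fin.last n)}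

/-- Neuron `i` is a `k`-piercing of `C`. -/
def IsPiercing {n : ℕ} (C : Set (Finset (Fin n))) (i : Fin n) (k : ℕ) : Prop :=
  ∃ σ τ : Finset (Fin n), σ ⊆ τ ∧ i ∉ τ ∧ (τ \ σ).card = k ∧
    Icc' σ τ ⊆ del C i ∧
    C = del C i ∪ Icc' (insert i σ) (insert i τ)

/-- `C` is `k`-inductively pierced. -/
inductive InductivelyPierced {n : ℕ} (k : ℕ) : Set (Finset (Fin n)) → Prop
  | empty : InductivelyPierced k {∅}
  | pierce (C : Set (Finset (Fin n))) (i : Fin n) (k' : ℕ) (hk : k' ≤ k)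
      (hp : IsPiercing C i k') (hrec : InductivelyPierced k (del C i)) :
      InductivelyPierced k C

/-- All elements of the canonical form have degree exactly two. -/
def DegreeTwo {n : ℕ} (C : Set (Finset (Fin n))) : Prop :=
  ∀ f ∈ CF C, f.totalDegree = 2

/-- The general relationship graph `G(C)` of a degree two code. -/
def GRel {n : ℕ} (C : Set (Finset (Fin n))) : SimpleGraph (Fin n) where
  Adj i j := i ≠ j ∧ ∀ f ∈ CF C, f.vars ≠ {i, j}
  symm := ⟨by
    rintro i j ⟨hne, h⟩
    exact ⟨hne.symm, fun f hf => by rw [Finset.pair_comm]; exact h f hf⟩⟩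
  loopless := ⟨fun i h => h.1 rfl⟩

/-- The order relation of `P(C)`: `i < j` iff `xᵢ(1-xⱼ) ∈ CF(J_C)`. -/
def PLt {n : ℕ} (C : Set (Finset (Fin n))) (i j : Fin n) : Prop :=
  X i * (1 - X j) ∈ CF C

/-- A simplicial vertex: its neighborhood is a clique. -/
def IsSimplicial {V : Type*} (G : SimpleGraph V) (v : V) : Prop :=
  G.IsClique (G.neighborSet v)

/-- A chordal graph: every cycle of length at least four has a chord. -/
def IsChordal {V : Type*} (G : SimpleGraph V) : Prop :=
  ∀ (u : V) (w : G.Walk u u), w.IsCycle → 4 ≤ w.length →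
    ∃ a b, G.Adj a b ∧ a ∈ w.support ∧ b ∈ w.support ∧ s(a, b) ∉ w.edges

/-- The code of a collection of sets. -/
def codeOf {X : Type*} {n : ℕ} (U : Fin n → Set X) : Set (Finset (Fin n)) :=
  {σ | ∃ p, ∀ i, p ∈ U i ↔ i ∈ σ}

/-- `S` is a `k`-dimensional sphere: a sphere of positive radius inside a
`(k+1)`-dimensional affine subspace, centered in that subspace. -/
def IsSubSphere {E : Type*} [NormedAddCommGroup E] [NormedSpace ℝ E] (k : ℕ)
    (S : Set E) : Prop :=
  ∃ (A : AffineSubspace ℝ E) (c : E) (ρ : ℝ), 0 < ρ ∧ c ∈ A ∧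
    Module.finrank ℝ A.direction = k + 1 ∧ S = (A : Set E) ∩ Metric.sphere c ρ

/-- The boundary spheres of the balls `B(xᵢ, rᵢ)` form a well-formed collection in `ℝ^d`. -/
def WellFormedBalls {d n : ℕ} (x : Fin n → EuclideanSpace ℝ (Fin d))
    (r : Fin n → ℝ) : Prop :=
  ∀ F : Finset (Fin n), F.Nonempty →
    (F.card ≤ d →
      (⋂ i ∈ F, Metric.sphere (x i) (r i)) = ∅ ∨
        IsSubSphere (d - F.card) (⋂ i ∈ F, Metric.sphere (x i) (r i))) ∧
    (F.card = d + 1 → (⋂ i ∈ F, Metric.sphere (x i) (r i)) = ∅)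

/-- `C` has a well-formed realization by open balls in `ℝ^d`. -/
def HasWFRealization {n : ℕ} (C : Set (Finset (Fin n))) (d : ℕ) : Prop :=
  ∃ (x : Fin n → EuclideanSpace ℝ (Fin d)) (r : Fin n → ℝ),
    (∀ i, 0 < r i) ∧ WellFormedBalls x r ∧
    codeOf (fun i => Metric.ball (x i) (r i)) = C


lemma evalAt_rho_ne {n : ℕ} {c σ : Finset (Fin n)} (h : c ≠ σ) :
    evalAt c (rho σ) = 0 := by
  obtain ⟨i, hi⟩ : ∃ i, ¬(i ∈ c ↔ i ∈ σ) := by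
    by_contra h'
    push_neg at h'
    exact h (Finset.ext fun i => h' i)
  unfold evalAt rho
  rw [map_mul, map_prod, map_prod]
  by_cases hiσ : i ∈ σ
  · have hic : i ∉ c := fun hc => hi ⟨fun _ => hiσ, fun _ => hc⟩
    rw [Finset.prod_eq_zero hiσ (by simp [hic]), zero_mul]
  · have hic : i ∈ c := by
      by_contra hic
      exact hi ⟨fun h => absurd h hic, fun h => absurd h hiσ⟩
    rw [Finset.prod_eq_zero (Finset.mem_compl.mpr hiσ)
      (by simp [hic]), mul_zero]

lemma pm_eq_sum {n : ℕ} (σ τ : Finset (Fin n)) (hd : Disjoint σ τ) :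
    (∏ i ∈ σ, (X i : PM n)) * ∏ j ∈ τ, (1 - X j) =
      ∑ δ ∈ ((σ ∪ τ)ᶜ).powerset, rho (σ ∪ δ) := by
  have h1 : (∏ k ∈ (σ ∪ τ)ᶜ, ((X k : PM n) + (1 - X k))) = 1 :=
    Finset.prod_eq_one fun k _ => by ring
  calc (∏ i ∈ σ, (X i : PM n)) * ∏ j ∈ τ, (1 - X j)
      = ((∏ i ∈ σ, (X i : PM n)) * ∏ j ∈ τ, (1 - X j)) *
          ∏ k ∈ (σ ∪ τ)ᶜ, ((X k : PM n) + (1 - X k)) := by rw [h1, mul_one]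
    _ = ∑ δ ∈ ((σ ∪ τ)ᶜ).powerset,
          ((∏ i ∈ σ, (X i : PM n)) * ∏ j ∈ τ, (1 - X j)) *
            ((∏ k ∈ δ, (X k : PM n)) * ∏ k ∈ (σ ∪ τ)ᶜ \ δ, (1 - X k)) := by
        rw [Finset.prod_add, Finset.mul_sum]
    _ = ∑ δ ∈ ((σ ∪ τ)ᶜ).powerset, rho (σ ∪ δ) := by
        refine Finset.sum_congr rfl fun δ hδ => ?_
        rw [Finset.mem_powerset] at hδ
        have hδσ : Disjoint σ δ := by
          refine Finset.disjoint_left.mpr fun a ha haδ => ?_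
          have := hδ haδ
          simp [Finset.mem_compl, Finset.mem_union] at this
          exact this.1 ha
        have hδτ : ∀ a ∈ δ, a ∉ τ := fun a ha hτa => by
          have := hδ ha
          rw [Finset.mem_compl, Finset.mem_union] at this
          exact this (Or.inr hτa)
        have hcompl : (σ ∪ δ)ᶜ = τ ∪ ((σ ∪ τ)ᶜ \ δ) := by
          ext a
          simp only [Finset.mem_compl, Finset.mem_union, Finset.mem_sdiff,
            not_or]
          constructor
          · rintro ⟨h1, h2⟩
            by_cases haτ : a ∈ τ
            · exact Or.inl haτ
            · exact Or.inr ⟨⟨h1, haτ⟩, h2⟩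
          · rintro (haτ | ⟨⟨h1, _⟩, h2⟩)
            · exact ⟨Finset.disjoint_right.mp hd haτ, fun h => hδτ a h haτ⟩
            · exact ⟨h1, h2⟩
        have hτd : Disjoint τ ((σ ∪ τ)ᶜ \ δ) := by
          refine Finset.disjoint_left.mpr fun a ha ha' => ?_
          rw [Finset.mem_sdiff, Finset.mem_compl, Finset.mem_union] at ha'
          exact ha'.1 (Or.inr ha)
        rw [rho, hcompl, Finset.prod_union hδσ, Finset.prod_union hτd]
        ring

/-- a pseudo-monomial lies in the neural ideal iff it vanishes on
every codeword. -/
theorem pseudoMonomial_mem_neuralIdeal_iff {n : ℕ} (C : Set (Finset (Fin n)))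
    (f : PM n) (hf : IsPseudoMonomial f) :
    f ∈ neuralIdeal C ↔ ∀ c ∈ C, evalAt c f = 0 := by
  constructor
  · intro hmem c hc
    have hle : neuralIdeal C ≤
        RingHom.ker (MvPolynomial.eval
          (fun i => if i ∈ c then (1 : ZMod 2) else 0)) := by
      rw [neuralIdeal, Ideal.span_le]
      rintro g ⟨σ, hσ, rfl⟩
      have : c ≠ σ := fun h => hσ (h ▸ hc)
      simpa [RingHom.mem_ker, evalAt] using evalAt_rho_ne this
    simpa [evalAt, RingHom.mem_ker] using hle hmem
  · intro hvan
    obtain ⟨σ, τ, hdisj, rfl⟩ := hf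
    rw [pm_eq_sum σ τ hdisj]
    apply Ideal.sum_mem
    intro δ hδ
    rw [Finset.mem_powerset] at hδ
    apply Ideal.subset_span
    refine ⟨σ ∪ δ, fun hC => ?_, rfl⟩
    have hval := hvan _ hC
    have h1 : evalAt (σ ∪ δ) ((∏ i ∈ σ, (X i : PM n)) * ∏ j ∈ τ, (1 - X j)) = 1 := by
      unfold evalAt
      rw [map_mul, map_prod, map_prod]
      have hτ : ∀ j ∈ τ, j ∉ σ ∪ δ := by
        intro j hj
        rw [Finset.mem_union]
        rintro (h | h)
        · exact Finset.disjoint_left.mp hdisj h hj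
        · have := hδ h
          rw [Finset.mem_compl, Finset.mem_union] at this
          exact this (Or.inr hj)
      rw [Finset.prod_eq_one (fun i hi => by
          simp only [eval_X, if_pos (Finset.mem_union.mpr (Or.inl hi))]),
        Finset.prod_eq_one (fun j hj => by
          simp only [map_sub, map_one, eval_X, if_neg (hτ j hj), sub_zero]),
        one_mul]
    rw [hval] at h1
    exact one_ne_zero h1.symm

end
end

section
/- For any subset σ ⊆ [n] and code C ⊆ 2^[n], we have σ ∈ C if and only if ρ_σ ∉ J_C, where ρ_σ is the indicator pseudo-monomial of σ. -/
open MvPolynomial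

noncomputable section

/-- `σ ∈ C` iff the indicator pseudo-monomial `ρ_σ` is not in `J_C`. -/
theorem mem_code_iff_rho_not_mem {n : ℕ} (C : Set (Finset (Fin n)))
    (σ : Finset (Fin n)) :
    σ ∈ C ↔ rho σ ∉ neuralIdeal C := by
  classical
  have key : ∀ τ : Finset (Fin n),
      MvPolynomial.eval (fun i => if i ∈ σ then (1:ZMod 2) else 0) (rho τ)
        = if τ = σ then 1 else 0 := by
    intro τ
    simp only [rho, map_mul, map_prod, eval_X, map_sub, map_one]
    by_cases h : τ = σ
    · subst h
      rw [if_pos rfl]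
      have h1 : (∏ i ∈ τ, if i ∈ τ then (1:ZMod 2) else 0) = 1 :=
        Finset.prod_eq_one fun i hi => if_pos hi
      have h2 : (∏ j ∈ τᶜ, (1 - if j ∈ τ then (1:ZMod 2) else 0)) = 1 :=
        Finset.prod_eq_one fun j hj => by
          rw [if_neg (Finset.mem_compl.mp hj)]; ring
      rw [h1, h2, one_mul]
    · rw [if_neg h]
      have : ∃ x, (x ∈ τ ∧ x ∉ σ) ∨ (x ∈ σ ∧ x ∉ τ) := by
        by_contra hc
        push_neg at hc
        exact h (Finset.ext fun x => ⟨fun hx => (hc x).1 hx, fun hx => (hc x).2 hx⟩)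
      obtain ⟨x, hx | hx⟩ := this
      · rw [Finset.prod_eq_zero hx.1 (by rw [if_neg hx.2]), zero_mul]
      · rw [Finset.prod_eq_zero (Finset.mem_compl.mpr hx.2)
          (by rw [if_pos hx.1]; ring), mul_zero]
  constructor
  · intro hσ hmem
    have hker : neuralIdeal C ≤ RingHom.ker
        (MvPolynomial.eval (fun i => if i ∈ σ then (1:ZMod 2) else 0)) := by
      rw [neuralIdeal, Ideal.span_le]
      rintro f ⟨τ, hτ, rfl⟩
      simp only [SetLike.mem_coe, RingHom.mem_ker, key]
      rw [if_neg (fun hh => hτ (by rw [hh]; exact hσ))]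
    have := hker hmem
    rw [RingHom.mem_ker, key, if_pos rfl] at this
    exact one_ne_zero this
  · intro hmem
    by_contra hσ
    exact hmem (Ideal.subset_span ⟨σ, hσ, rfl⟩)

end
end

section
/- For any code C ⊆ 2^[n], the pseudo-monomials lying in the neural ideal J_{C\n} of the deletion C\n are exactly those pseudo-monomials in J_C that do not depend on the variable x_n. -/
open MvPolynomial

noncomputable section

lemma split {m : ℕ} (σ τ R : Finset (Fin m)) (hσ : Disjoint R σ) (hτ : Disjoint R τ) :
    (∏ i ∈ σ, (X i : PM m)) * ∏ j ∈ τ, (1 - X j) =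
      ∑ S ∈ R.powerset, (∏ i ∈ σ ∪ S, (X i : PM m)) * ∏ j ∈ τ ∪ (R \ S), (1 - X j) := by
  classical
  induction R using Finset.induction_on with
  | empty => simp
  | @insert a R ha ih =>
    have haσ : a ∉ σ := fun h => (Finset.disjoint_left.mp hσ (Finset.mem_insert_self a R)) h
    have haτ : a ∉ τ := fun h => (Finset.disjoint_left.mp hτ (Finset.mem_insert_self a R)) h
    have hσ' : Disjoint R σ := hσ.mono_left (Finset.subset_insert a R)
    have hτ' : Disjoint R τ := hτ.mono_left (Finset.subset_insert a R)
    rw [Finset.sum_powerset_insert ha]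
    have h1 : ∀ S ∈ R.powerset,
        (∏ i ∈ σ ∪ S, (X i : PM m)) * ∏ j ∈ τ ∪ (insert a R \ S), (1 - X j)
          = (1 - X a) * ((∏ i ∈ σ ∪ S, (X i : PM m)) * ∏ j ∈ τ ∪ (R \ S), (1 - X j)) := by
      intro S hS
      have hSR : S ⊆ R := Finset.mem_powerset.mp hS
      have haS : a ∉ S := fun h => ha (hSR h)
      have : insert a R \ S = insert a (R \ S) := by
        ext x; simp only [Finset.mem_sdiff, Finset.mem_insert]
        constructor
        · rintro ⟨h1 | h1, h2⟩
          · exact Or.inl h1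
          · exact Or.inr ⟨h1, h2⟩
        · rintro (rfl | ⟨h1, h2⟩)
          · exact ⟨Or.inl rfl, haS⟩
          · exact ⟨Or.inr h1, h2⟩
      rw [this]
      have hna : a ∉ τ ∪ (R \ S) := by
        simp only [Finset.mem_union, Finset.mem_sdiff]; tauto
      rw [Finset.union_insert, Finset.prod_insert hna]
      ring
    have h2 : ∀ S ∈ R.powerset,
        (∏ i ∈ σ ∪ insert a S, (X i : PM m)) * ∏ j ∈ τ ∪ (insert a R \ insert a S), (1 - X j)
          = X a * ((∏ i ∈ σ ∪ S, (X i : PM m)) * ∏ j ∈ τ ∪ (R \ S), (1 - X j)) := by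
      intro S hS
      have hSR : S ⊆ R := Finset.mem_powerset.mp hS
      have haS : a ∉ S := fun h => ha (hSR h)
      have hd : insert a R \ insert a S = R \ S := by
        ext x; simp only [Finset.mem_sdiff, Finset.mem_insert, not_or]
        constructor
        · rintro ⟨h1 | h1, h2, h3⟩
          · exact absurd h1 h2
          · exact ⟨h1, h3⟩
        · rintro ⟨h1, h2⟩
          exact ⟨Or.inr h1, fun h => ha (h ▸ h1), h2⟩
      have hna : a ∉ σ ∪ S := by simp only [Finset.mem_union]; tauto
      rw [hd, Finset.union_insert, Finset.prod_insert hna]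
      ring
    rw [Finset.sum_congr rfl h1, Finset.sum_congr rfl h2, ← Finset.mul_sum, ← Finset.mul_sum,
      ← ih hσ' hτ']
    ring

lemma evalAt_pm {m : ℕ} (c σ τ : Finset (Fin m)) :
    evalAt c ((∏ i ∈ σ, X i) * ∏ j ∈ τ, (1 - X j)) =
      if σ ⊆ c ∧ Disjoint τ c then 1 else 0 := by
  classical
  unfold evalAt
  rw [map_mul, map_prod, map_prod]
  by_cases h : σ ⊆ c ∧ Disjoint τ c
  · rw [if_pos h]
    have e1 : ∀ i ∈ σ, eval (fun i => if i ∈ c then (1 : ZMod 2) else 0) (X i) = 1 := by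
      intro i hi; simp [eval_X, h.1 hi]
    have e2 : ∀ j ∈ τ, eval (fun i => if i ∈ c then (1 : ZMod 2) else 0) (1 - X j) = 1 := by
      intro j hj
      have : j ∉ c := Finset.disjoint_left.mp h.2 hj
      simp [eval_X, this]
    rw [Finset.prod_congr rfl e1, Finset.prod_congr rfl e2]
    simp
  · rw [if_neg h]
    rw [not_and_or] at h
    rcases h with h | h
    · obtain ⟨i, hi, hic⟩ := Finset.not_subset.mp h
      rw [Finset.prod_eq_zero hi (by simp [eval_X, hic]), zero_mul]
    · obtain ⟨j, hjτ, hjc⟩ := Finset.not_disjoint_iff.mp h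
      rw [Finset.prod_eq_zero hjτ (by simp [eval_X, hjc]), mul_zero]
lemma evalAt_rho {m : ℕ} (c σ₀ : Finset (Fin m)) :
    evalAt c (rho σ₀) = if σ₀ = c then 1 else 0 := by
  rw [rho, evalAt_pm]
  congr 1
  simp only [eq_iff_iff]
  constructor
  · rintro ⟨h1, h2⟩
    apply Finset.Subset.antisymm h1
    intro x hx
    by_contra hns
    exact Finset.disjoint_left.mp h2 (Finset.mem_compl.mpr hns) hx
  · rintro rfl
    exact ⟨le_refl _, disjoint_compl_left⟩

lemma pm_mem_iff {m : ℕ} (C : Set (Finset (Fin m))) {f : PM m} (hf : IsPseudoMonomial f) :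
    f ∈ neuralIdeal C ↔ ∀ c ∈ C, evalAt c f = 0 := by
  classical
  constructor
  · intro hmem c hc
    have hle : neuralIdeal C ≤ RingHom.ker (MvPolynomial.eval
        (fun i => if i ∈ c then (1 : ZMod 2) else 0)) := by
      rw [neuralIdeal, Ideal.span_le]
      rintro p ⟨σ₀, hσ₀, rfl⟩
      have : σ₀ ≠ c := fun h => hσ₀ (h ▸ hc)
      rw [SetLike.mem_coe, RingHom.mem_ker]
      show evalAt c (rho σ₀) = 0
      rw [evalAt_rho, if_neg this]
    exact hle hmem
  · obtain ⟨σ, τ, hdisj, rfl⟩ := hf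
    intro h
    have hσR : Disjoint (σ ∪ τ)ᶜ σ :=
      disjoint_compl_left.mono_right Finset.subset_union_left
    have hτR : Disjoint (σ ∪ τ)ᶜ τ :=
      disjoint_compl_left.mono_right Finset.subset_union_right
    rw [split σ τ (σ ∪ τ)ᶜ hσR hτR]
    apply Ideal.sum_mem
    intro S hS
    have hSR : S ⊆ (σ ∪ τ)ᶜ := Finset.mem_powerset.mp hS
    have hSστ : ∀ x ∈ S, x ∉ σ ∧ x ∉ τ := by
      intro x hx
      have := hSR hx
      rw [Finset.mem_compl, Finset.mem_union, not_or] at this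
      exact this
    apply Ideal.subset_span
    refine ⟨σ ∪ S, ?_, ?_⟩
    · intro hmemC
      have h0 := h (σ ∪ S) hmemC
      rw [evalAt_pm] at h0
      have hcond : σ ⊆ σ ∪ S ∧ Disjoint τ (σ ∪ S) := by
        refine ⟨Finset.subset_union_left, Finset.disjoint_union_right.mpr
          ⟨hdisj.symm, Finset.disjoint_left.mpr fun x hx hxS => (hSστ x hxS).2 hx⟩⟩
      rw [if_pos hcond] at h0
      exact one_ne_zero h0
    · rw [rho]
      have hset : (σ ∪ S)ᶜ = τ ∪ ((σ ∪ τ)ᶜ \ S) := by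
        ext x
        have h1 : x ∈ S → ¬ x ∈ σ ∧ ¬ x ∈ τ := hSστ x
        have h2 : x ∈ σ → ¬ x ∈ τ := fun h => Finset.disjoint_left.mp hdisj h
        simp only [Finset.mem_compl, Finset.mem_union, Finset.mem_sdiff, not_or]
        tauto
      rw [hset]
lemma map_eq_erase_iff {n : ℕ} (d : Finset (Fin n)) (c : Finset (Fin (n + 1))) :
    d.map Fin.castSuccEmb = c.erase (Fin.last n) ↔
      ∀ i : Fin n, i ∈ d ↔ i.castSucc ∈ c := by
  constructor
  · intro h i
    constructor
    · intro hi
      have : i.castSucc ∈ d.map Fin.castSuccEmb := Finset.mem_map_of_mem _ hi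
      rw [h] at this
      exact (Finset.mem_erase.mp this).2
    · intro hi
      have : i.castSucc ∈ c.erase (Fin.last n) :=
        Finset.mem_erase.mpr ⟨(Fin.castSucc_lt_last i).ne, hi⟩
      rw [← h] at this
      obtain ⟨j, hj, hje⟩ := Finset.mem_map.mp this
      have : j = i := Fin.castSucc_injective n hje
      exact this ▸ hj
  · intro h
    ext j
    rw [Finset.mem_map, Finset.mem_erase]
    constructor
    · rintro ⟨i, hi, rfl⟩
      exact ⟨(Fin.castSucc_lt_last i).ne, (h i).mp hi⟩
    · rintro ⟨hne, hj⟩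
      obtain ⟨i, rfl⟩ := Fin.exists_castSucc_eq.mpr hne
      exact ⟨i, (h i).mpr hj, rfl⟩

lemma evalAt_rename {n : ℕ} (c : Finset (Fin (n + 1))) (d : Finset (Fin n))
    (h : ∀ i : Fin n, i ∈ d ↔ i.castSucc ∈ c) (f : PM n) :
    evalAt c (rename Fin.castSucc f) = evalAt d f := by
  unfold evalAt
  rw [eval_rename]
  have he : ((fun i => if i ∈ c then (1 : ZMod 2) else 0) ∘ Fin.castSucc) =
      fun i => if i ∈ d then 1 else 0 := by
    funext i
    simp only [Function.comp_apply]
    rw [if_congr ((h i).symm) rfl rfl]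
  rw [he]

lemma pm_rename {n : ℕ} {f : PM n} (hf : IsPseudoMonomial f) :
    IsPseudoMonomial (rename Fin.castSucc f : PM (n + 1)) := by
  obtain ⟨σ, τ, hd, rfl⟩ := hf
  refine ⟨σ.image Fin.castSucc, τ.image Fin.castSucc,
    Finset.disjoint_image (Fin.castSucc_injective n) |>.mpr hd, ?_⟩
  rw [map_mul, map_prod, map_prod,
    Finset.prod_image (fun a _ b _ h => Fin.castSucc_injective n h),
    Finset.prod_image (fun a _ b _ h => Fin.castSucc_injective n h)]
  simp [rename_X]

lemma part1 {n : ℕ} (C : Set (Finset (Fin (n + 1)))) (f : PM n)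
    (hf : IsPseudoMonomial f) :
    f ∈ neuralIdeal (delLast C) ↔ rename Fin.castSucc f ∈ neuralIdeal C := by
  classical
  rw [pm_mem_iff _ hf, pm_mem_iff _ (pm_rename hf)]
  constructor
  · intro h c hc
    set d : Finset (Fin n) := Finset.univ.filter (fun i => i.castSucc ∈ c) with hd
    have hdi : ∀ i : Fin n, i ∈ d ↔ i.castSucc ∈ c := by
      intro i; simp [hd]
    rw [evalAt_rename c d hdi]
    exact h d ⟨c, hc, (map_eq_erase_iff d c).mpr hdi⟩
  · intro h d hd
    obtain ⟨c, hc, hcd⟩ := hd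
    rw [← evalAt_rename c d ((map_eq_erase_iff d c).mp hcd)]
    exact h c hc

/-- the pseudo-monomials in `J_{C\n}` are exactly the
pseudo-monomials in `J_C` not depending on `xₙ` (via the subring embedding
`rename Fin.castSucc`). -/
theorem pseudoMonomials_deletion {n : ℕ} (C : Set (Finset (Fin (n + 1)))) :
    (∀ f : PM n, IsPseudoMonomial f →
      (f ∈ neuralIdeal (delLast C) ↔
        rename Fin.castSucc f ∈ neuralIdeal C)) ∧
    (∀ g : PM (n + 1), IsPseudoMonomial g → g ∈ neuralIdeal C →
      Fin.last n ∉ g.vars →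
      ∃ f : PM n, IsPseudoMonomial f ∧ f ∈ neuralIdeal (delLast C) ∧
        rename Fin.castSucc f = g) := by
  classical
  refine ⟨fun f hf => part1 C f hf, ?_⟩
  intro g hg hgJ hvars
  have hsub : ↑g.vars ⊆ Set.range (Fin.castSucc : Fin n → Fin (n + 1)) := by
    intro i hi
    have hne : i ≠ Fin.last n := fun h => hvars (h ▸ hi)
    exact Fin.exists_castSucc_eq.mpr hne
  obtain ⟨q, hq⟩ := exists_rename_eq_of_vars_subset_range g Fin.castSucc
    (Fin.castSucc_injective n) hsub
  have key : ∀ c c' : Finset (Fin (n + 1)),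
      (∀ i : Fin n, (i.castSucc ∈ c ↔ i.castSucc ∈ c')) →
      evalAt c g = evalAt c' g := by
    intro c c' hcc
    set d : Finset (Fin n) := Finset.univ.filter (fun i => i.castSucc ∈ c) with hd
    have hdi : ∀ i : Fin n, i ∈ d ↔ i.castSucc ∈ c := by intro i; simp [hd]
    have hdi' : ∀ i : Fin n, i ∈ d ↔ i.castSucc ∈ c' := fun i => (hdi i).trans (hcc i)
    rw [← hq, evalAt_rename c d hdi, evalAt_rename c' d hdi']
  obtain ⟨σ, τ, hdisj, rfl⟩ := hg
  have hlastσ : Fin.last n ∉ σ := by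
    intro hl
    have h1 : evalAt σ ((∏ i ∈ σ, (X i : PM (n+1))) * ∏ j ∈ τ, (1 - X j)) = 1 := by
      rw [evalAt_pm, if_pos ⟨subset_refl _, hdisj.symm⟩]
    have h2 : evalAt (σ.erase (Fin.last n))
        ((∏ i ∈ σ, (X i : PM (n+1))) * ∏ j ∈ τ, (1 - X j)) = 0 := by
      rw [evalAt_pm, if_neg]
      rintro ⟨hsub2, -⟩
      exact (Finset.mem_erase.mp (hsub2 hl)).1 rfl
    have hk := key σ (σ.erase (Fin.last n))
      (fun i => by simp [Finset.mem_erase, (Fin.castSucc_lt_last i).ne])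
    rw [h1, h2] at hk
    exact one_ne_zero hk
  have hlastτ : Fin.last n ∉ τ := by
    intro hl
    have h1 : evalAt σ ((∏ i ∈ σ, (X i : PM (n+1))) * ∏ j ∈ τ, (1 - X j)) = 1 := by
      rw [evalAt_pm, if_pos ⟨subset_refl _, hdisj.symm⟩]
    have h2 : evalAt (insert (Fin.last n) σ)
        ((∏ i ∈ σ, (X i : PM (n+1))) * ∏ j ∈ τ, (1 - X j)) = 0 := by
      rw [evalAt_pm, if_neg]
      rintro ⟨-, hdisj2⟩
      exact Finset.disjoint_left.mp hdisj2 hl (Finset.mem_insert_self _ _)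
    have hk := key σ (insert (Fin.last n) σ)
      (fun i => by simp [Finset.mem_insert, (Fin.castSucc_lt_last i).ne])
    rw [h1, h2] at hk
    exact one_ne_zero hk
  set σ' : Finset (Fin n) := σ.preimage Fin.castSucc
    ((Fin.castSucc_injective n).injOn) with hσ'
  set τ' : Finset (Fin n) := τ.preimage Fin.castSucc
    ((Fin.castSucc_injective n).injOn) with hτ'
  have himσ : σ'.image Fin.castSucc = σ := by
    ext j
    simp only [Finset.mem_image, hσ', Finset.mem_preimage]
    constructor
    · rintro ⟨i, hi, rfl⟩; exact hi
    · intro hj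
      have hne : j ≠ Fin.last n := fun h => hlastσ (h ▸ hj)
      obtain ⟨i, rfl⟩ := Fin.exists_castSucc_eq.mpr hne
      exact ⟨i, hj, rfl⟩
  have himτ : τ'.image Fin.castSucc = τ := by
    ext j
    simp only [Finset.mem_image, hτ', Finset.mem_preimage]
    constructor
    · rintro ⟨i, hi, rfl⟩; exact hi
    · intro hj
      have hne : j ≠ Fin.last n := fun h => hlastτ (h ▸ hj)
      obtain ⟨i, rfl⟩ := Fin.exists_castSucc_eq.mpr hne
      exact ⟨i, hj, rfl⟩
  have hdisj' : Disjoint σ' τ' := Finset.disjoint_left.mpr fun i hi hti =>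
    Finset.disjoint_left.mp hdisj (Finset.mem_preimage.mp hi) (Finset.mem_preimage.mp hti)
  set f : PM n := (∏ i ∈ σ', X i) * ∏ j ∈ τ', (1 - X j) with hfdef
  have hpmf : IsPseudoMonomial f := ⟨σ', τ', hdisj', rfl⟩
  have hren : rename Fin.castSucc f = (∏ i ∈ σ, (X i : PM (n+1))) * ∏ j ∈ τ, (1 - X j) := by
    rw [hfdef, map_mul, map_prod, map_prod]
    simp only [map_sub, map_one, rename_X]
    rw [← himσ, ← himτ,
      Finset.prod_image (fun a _ b _ h => Fin.castSucc_injective n h),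
      Finset.prod_image (fun a _ b _ h => Fin.castSucc_injective n h)]
  exact ⟨f, hpmf, (part1 C f hpmf).mpr (hren ▸ hgJ), hren⟩


end
end

section
/- Let C ⊆ 2^[n] be a code and suppose neuron i is a k-piercing of C for some k. Then C is inductively pierced if and only if C\i is inductively pierced. -/
open MvPolynomial

noncomputable section

lemma ip_mono {n m m' : ℕ} {C : Set (Finset (Fin n))} (h : InductivelyPierced m C)
    (hle : m ≤ m') : InductivelyPierced m' C := by
  induction h with
  | empty => exact .empty
  | pierce C i k' hk hp hrec ih => exact .pierce C i k' (hk.trans hle) hp ih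

lemma del_del {n : ℕ} (C : Set (Finset (Fin n))) (i j : Fin n) :
    del (del C i) j = del (del C j) i := by
  simp only [del, Set.image_image]
  exact Set.image_congr' (fun c => Finset.erase_right_comm)

lemma del_Icc {n : ℕ} {a b : Finset (Fin n)} (hab : a ⊆ b) (i : Fin n) :
    del (Icc' a b) i = Icc' (a.erase i) (b.erase i) := by
  ext d
  constructor
  · rintro ⟨c, ⟨h1, h2⟩, rfl⟩
    exact ⟨Finset.erase_subset_erase _ h1, Finset.erase_subset_erase _ h2⟩
  · rintro ⟨h1, h2⟩
    have hid : i ∉ d := fun hid => (Finset.mem_erase.1 (h2 hid)).1 rfl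
    by_cases hi : i ∈ a
    · refine ⟨insert i d, ⟨?_, ?_⟩, ?_⟩
      · intro x hx
        by_cases hxi : x = i
        · simp [hxi]
        · exact Finset.mem_insert_of_mem (h1 (Finset.mem_erase.2 ⟨hxi, hx⟩))
      · exact Finset.insert_subset (hab hi) (h2.trans (Finset.erase_subset _ _))
      · exact Finset.erase_insert hid
    · refine ⟨d, ⟨?_, h2.trans (Finset.erase_subset _ _)⟩, Finset.erase_eq_of_notMem hid⟩
      rwa [Finset.erase_eq_of_notMem hi] at h1

lemma piercing_del {n : ℕ} {C : Set (Finset (Fin n))} {i j : Fin n} {k : ℕ}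
    (hij : j ≠ i) (hp : IsPiercing C j k) :
    ∃ k', IsPiercing (del C i) j k' := by
  obtain ⟨σ, τ, hστ, hjτ, hcard, hIcc, hC⟩ := hp
  refine ⟨_, σ.erase i, τ.erase i, Finset.erase_subset_erase _ hστ,
    fun h => hjτ (Finset.mem_of_mem_erase h), rfl, ?_, ?_⟩
  · rw [← del_Icc hστ, del_del]
    exact Set.image_mono hIcc
  · conv_lhs => rw [hC]
    rw [del, Set.image_union, ← del, ← del, del_del,
      del_Icc (Finset.insert_subset_insert _ hστ) i,
      Finset.erase_insert_of_ne hij, Finset.erase_insert_of_ne hij]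

lemma forward_del {n m : ℕ} {C : Set (Finset (Fin n))} (h : InductivelyPierced m C) :
    ∀ i k, IsPiercing C i k → ∃ m', InductivelyPierced m' (del C i) := by
  induction h with
  | empty =>
    intro i k _
    refine ⟨0, ?_⟩
    have hd : del ({∅} : Set (Finset (Fin n))) i = {∅} := by
      simp [del]
    rw [hd]
    exact .empty
  | pierce C j k' hk hpj hrec ih =>
    intro i k hpi
    by_cases hij : i = j
    · subst hij
      exact ⟨_, hrec⟩
    · obtain ⟨k₁, hpi'⟩ := piercing_del hij hpi
      obtain ⟨m₁, hm₁⟩ := ih i k₁ hpi'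
      obtain ⟨k₂, hpj'⟩ := piercing_del (fun h => hij h.symm) hpj
      refine ⟨max m₁ k₂, .pierce _ j k₂ (le_max_right _ _) hpj' ?_⟩
      rw [del_del]
      exact ip_mono hm₁ (le_max_left _ _)

/-- if `i` is a piercing of `C`, then `C` is inductively pierced
iff `C\i` is inductively pierced. -/
theorem greedy_piercing {n : ℕ} (C : Set (Finset (Fin n))) (hgood : GoodCode C)
    (i : Fin n) (k : ℕ) (hp : IsPiercing C i k) :
    (∃ m, InductivelyPierced m C) ↔ ∃ m, InductivelyPierced m (del C i) := by
  constructor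
  · rintro ⟨m, hm⟩
    exact forward_del hm i k hp
  · rintro ⟨m, hm⟩
    exact ⟨max m k, .pierce C i k (le_max_right _ _) hp (ip_mono hm (le_max_left _ _))⟩

end
end

section
/- Every chordal graph that is not a clique contains two non-adjacent simplicial vertices. -/
open MvPolynomial

noncomputable section

section ChordalAux

open SimpleGraph

variable {V : Type*} {G : SimpleGraph V}


lemma edge_of_length_one {a b : V} (p : G.Walk a b) (h : p.length = 1) :
    s(a, b) ∈ p.edges := by
  cases p with
  | nil => simp at h
  | cons h' q =>
    cases q with
    | nil => simp
    | cons h'' q' => simp [Walk.length_cons] at h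

lemma eq_of_reachable_of_no_adj {H : SimpleGraph V} (hno : ∀ x y : V, ¬ H.Adj x y)
    {a b : V} (h : H.Reachable a b) : a = b := by
  obtain ⟨p⟩ := h
  cases p with
  | nil => rfl
  | cons h' q => exact absurd h' (hno _ _)

lemma min_walk_edge {s t : V} (P : G.Walk s t)
    (hmin : ∀ Q : G.Walk s t, P.length ≤ Q.length)
    {a b : V} (ha : a ∈ P.support) (hb : b ∈ P.support) (hab : G.Adj a b) :
    s(a, b) ∈ P.edges := by
  classical
  by_contra hne
  have hspec := P.take_spec ha
  have hlen : (P.takeUntil a ha).length + (P.dropUntil a ha).length = P.length := by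
    conv_rhs => rw [← hspec]
    rw [Walk.length_append]
  have hb' : b ∈ (P.takeUntil a ha).support ∨ b ∈ (P.dropUntil a ha).support := by
    rw [← hspec, Walk.mem_support_append_iff] at hb; exact hb
  rcases hb' with hb1 | hb2
  · set P₁ := P.takeUntil a ha with hP₁
    have hQspec := P₁.take_spec hb1
    have hQlen : (P₁.takeUntil b hb1).length + (P₁.dropUntil b hb1).length = P₁.length := by
      conv_rhs => rw [← hQspec]; rw [Walk.length_append]
    match hq : (P₁.dropUntil b hb1).length with
    | 0 =>
      have : b = a := Walk.eq_of_length_eq_zero hq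
      exact hab.ne this.symm
    | 1 =>
      have : s(b, a) ∈ (P₁.dropUntil b hb1).edges := edge_of_length_one _ hq
      have : s(b, a) ∈ P.edges :=
        P.edges_takeUntil_subset ha (P₁.edges_dropUntil_subset hb1 this)
      rw [Sym2.eq_swap] at this
      exact hne this
    | (n+2) =>
      have hQ' : ((P₁.takeUntil b hb1).append ((Walk.cons hab.symm Walk.nil).append
          (P.dropUntil a ha))).length < P.length := by
        simp only [Walk.length_append, Walk.length_cons, Walk.length_nil]
        omega
      exact absurd hQ' (not_lt.mpr (hmin _))
  · set P₂ := P.dropUntil a ha with hP₂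
    have hRspec := P₂.take_spec hb2
    have hRlen : (P₂.takeUntil b hb2).length + (P₂.dropUntil b hb2).length = P₂.length := by
      conv_rhs => rw [← hRspec]; rw [Walk.length_append]
    match hq : (P₂.takeUntil b hb2).length with
    | 0 =>
      have : a = b := Walk.eq_of_length_eq_zero hq
      exact hab.ne this
    | 1 =>
      have : s(a, b) ∈ (P₂.takeUntil b hb2).edges := edge_of_length_one _ hq
      exact hne (P.edges_dropUntil_subset ha (P₂.edges_takeUntil_subset hb2 this))
    | (n+2) =>
      have hQ' : ((P.takeUntil a ha).append ((Walk.cons hab Walk.nil).append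
          (P₂.dropUntil b hb2))).length < P.length := by
        simp only [Walk.length_append, Walk.length_cons, Walk.length_nil]
        omega
      exact absurd hQ' (not_lt.mpr (hmin _))

lemma chordal_induce (h : IsChordal G) (T : Set V) : IsChordal (G.induce T) := by
  intro u w hcyc hlen
  let f : G.induce T ↪g G := Embedding.induce T
  have hinj : Function.Injective f := f.injective
  obtain ⟨a, b, hab, hasup, hbsup, hane⟩ :=
    h (f u) (w.map f.toHom) (hcyc.map hinj) (by rwa [Walk.length_map])
  rw [Walk.support_map, List.mem_map] at hasup hbsup
  obtain ⟨a', ha', rfl⟩ := hasup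
  obtain ⟨b', hb', rfl⟩ := hbsup
  refine ⟨a', b', hab, ha', hb', fun hmem => hane ?_⟩
  rw [Walk.edges_map, List.mem_map]
  exact ⟨s(a', b'), hmem, rfl⟩

lemma reachable_transfer {T T' : Set V} {x y : {v // v ∈ T}} (W : (G.induce T).Walk x y)
    (hsub : ∀ v ∈ W.support, (v : V) ∈ T') :
    (G.induce T').Reachable ⟨x, hsub x W.start_mem_support⟩ ⟨y, hsub y W.end_mem_support⟩ := by
  induction W with
  | nil => exact Reachable.refl _
  | @cons u v w h p ih =>
    have hsub' : ∀ z ∈ p.support, (z : V) ∈ T' := fun z hz =>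
      hsub z (by rw [Walk.support_cons]; exact List.mem_cons_of_mem _ hz)
    have hu : (u : V) ∈ T' := hsub u (Walk.start_mem_support _)
    have hadj : (G.induce T').Adj ⟨u, hu⟩ ⟨v, hsub' v p.start_mem_support⟩ := by
      simp only [comap_adj, Function.Embedding.coe_subtype] at h ⊢
      exact h
    exact (Adj.reachable hadj).trans (ih hsub')

lemma simplicial_lift {T : Set V} {u : V} (hu : u ∈ T)
    (hnb : ∀ w, G.Adj u w → w ∈ T)
    (hs : IsSimplicial (G.induce T) ⟨u, hu⟩) : IsSimplicial G u := by
  intro x hx y hy hxy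
  have hx' : G.Adj u x := hx
  have hy' : G.Adj u y := hy
  have hxT : x ∈ T := hnb x hx'
  have hyT : y ∈ T := hnb y hy'
  have : (G.induce T).Adj ⟨x, hxT⟩ ⟨y, hyT⟩ := by
    refine hs (x := ⟨x, hxT⟩) ?_ (y := ⟨y, hyT⟩) ?_ ?_
    · show (G.induce T).Adj _ _
      simp only [comap_adj, Function.Embedding.coe_subtype]; exact hx'
    · show (G.induce T).Adj _ _
      simp only [comap_adj, Function.Embedding.coe_subtype]; exact hy'
    · simp only [ne_eq, Subtype.mk.injEq]; exact hxy
  simpa only [comap_adj, Function.Embedding.coe_subtype] using this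

lemma cycle_of_two_paths {s t : V} (hnadj : ¬ G.Adj s t) (P Q : G.Walk s t)
    (hP : P.IsPath) (hQ : Q.IsPath)
    (hdisj : ∀ v, v ∈ P.support → v ∈ Q.support → v = s ∨ v = t)
    (hPlen : 2 ≤ P.length) (hQlen : 2 ≤ Q.length) :
    (P.append Q.reverse).IsCycle := by
  have hst : s ≠ t := by
    intro h; subst h
    rw [Walk.isPath_iff_eq_nil.mp hP] at hPlen
    simp at hPlen
  have hedge_disj : ∀ e, e ∈ P.edges → e ∈ Q.edges → False := by
    intro e heP heQ
    induction e with
    | h x y =>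
      have hx : x ∈ P.support := Walk.fst_mem_support_of_mem_edges _ heP
      have hy : y ∈ P.support := Walk.snd_mem_support_of_mem_edges _ heP
      have hx' : x ∈ Q.support := Walk.fst_mem_support_of_mem_edges _ heQ
      have hy' : y ∈ Q.support := Walk.snd_mem_support_of_mem_edges _ heQ
      have hadj : G.Adj x y := P.edges_subset_edgeSet heP
      rcases hdisj x hx hx' with rfl | rfl <;> rcases hdisj y hy hy' with rfl | rfl
      · exact hadj.ne rfl
      · exact hnadj hadj
      · exact hnadj hadj.symm
      · exact hadj.ne rfl
  have htrail : (P.append Q.reverse).IsTrail := by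
    constructor
    rw [Walk.edges_append, Walk.edges_reverse]
    refine List.Nodup.append hP.isTrail.edges_nodup (List.nodup_reverse.mpr hQ.isTrail.edges_nodup) ?_
    intro e heP heQ
    exact hedge_disj e heP (List.mem_reverse.mp heQ)
  have hnn : P.append Q.reverse ≠ Walk.nil := by
    intro h
    have := congrArg Walk.length h
    rw [Walk.length_append, Walk.length_reverse] at this
    simp only [Walk.length_nil] at this
    omega
  refine ⟨⟨htrail, hnn⟩, ?_⟩
  have hsupp : (P.append Q.reverse).support.tail
      = P.support.tail ++ Q.reverse.support.tail := by
    rw [Walk.support_append]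
    conv_lhs => rw [P.support_eq_cons]
    rfl
  rw [hsupp]
  have hsP : s ∉ P.support.tail := by
    have := hP.support_nodup
    rw [P.support_eq_cons] at this
    exact (List.nodup_cons.mp this).1
  have htQ : t ∉ Q.reverse.support.tail := by
    have := hQ.reverse.support_nodup
    rw [Q.reverse.support_eq_cons] at this
    exact (List.nodup_cons.mp this).1
  refine List.Nodup.append (hP.support_nodup.tail) (hQ.reverse.support_nodup.tail) ?_
  intro x hxP hxQ
  have hx1 : x ∈ P.support := List.mem_of_mem_tail hxP
  have hx2 : x ∈ Q.support := by
    have := List.mem_of_mem_tail hxQ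
    rwa [Walk.support_reverse, List.mem_reverse] at this
  rcases hdisj x hx1 hx2 with rfl | rfl
  · exact hsP hxP
  · exact htQ hxQ

lemma walk_first_exit {T : Set V} {s : V} {x y : ↥(insert s T)}
    (W : (G.induce (insert s T)).Walk x y) :
    ∀ (hx : (x : V) ∈ T),
      (∃ hy : (y : V) ∈ T, (G.induce T).Reachable ⟨x, hx⟩ ⟨y, hy⟩) ∨
      (∃ u, ∃ hu : u ∈ T, G.Adj s u ∧ (G.induce T).Reachable ⟨x, hx⟩ ⟨u, hu⟩) := by
  induction W with
  | nil => exact fun hx => Or.inl ⟨hx, Reachable.refl _⟩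
  | @cons u v w h p ih =>
    intro hx
    by_cases hv : (v : V) = s
    · refine Or.inr ⟨u, hx, ?_, Reachable.refl _⟩
      have : G.Adj (u : V) (v : V) := h
      rw [hv] at this
      exact this.symm
    · have hvT : (v : V) ∈ T := by
        rcases Set.mem_insert_iff.mp v.2 with h' | h'
        · exact absurd h' hv
        · exact h'
      have hadj : (G.induce T).Adj ⟨u, hx⟩ ⟨v, hvT⟩ := by
        simp only [comap_adj, Function.Embedding.coe_subtype] at h ⊢
        exact h
      rcases ih hvT with ⟨hy, r⟩ | ⟨z, hz, hadj', r⟩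
      · exact Or.inl ⟨hy, hadj.reachable.trans r⟩
      · exact Or.inr ⟨z, hz, hadj', hadj.reachable.trans r⟩

universe u

lemma side_path {T C : Set V} (hCT : ∀ v ∈ C, v ∈ T)
    (hCcomp : ∀ (u : V) (hu : u ∈ C) (v : V) (hvT : v ∈ T),
      (G.induce T).Reachable ⟨u, hCT u hu⟩ ⟨v, hvT⟩ → v ∈ C)
    (hCconn : ∀ (u v : V) (hu : u ∈ C) (hv : v ∈ C),
      (G.induce T).Reachable ⟨u, hCT u hu⟩ ⟨v, hCT v hv⟩)
    {s t : V} (hst : s ≠ t) (hnadj : ¬ G.Adj s t)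
    (hsC : ∃ u, u ∈ C ∧ G.Adj s u) (htC : ∃ u, u ∈ C ∧ G.Adj t u) :
    ∃ P : G.Walk s t, P.IsPath ∧ 2 ≤ P.length ∧
      (∀ v ∈ P.support, v ∈ C ∨ v = s ∨ v = t) ∧
      (∀ x y, x ∈ P.support → y ∈ P.support → G.Adj x y → s(x, y) ∈ P.edges) := by
  classical
  obtain ⟨us, husC, hsadj⟩ := hsC
  obtain ⟨ut, hutC, htadj⟩ := htC
  set TC : Set V := C ∪ {s, t} with hTC
  have hsTC : s ∈ TC := Or.inr (Or.inl rfl)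
  have htTC : t ∈ TC := Or.inr (Or.inr rfl)
  obtain ⟨W⟩ := hCconn us ut husC hutC
  have hWC : ∀ z ∈ W.support, (z : V) ∈ TC := by
    intro z hz
    exact Or.inl (hCcomp us husC ↑z z.2 ⟨W.takeUntil z hz⟩)
  have r1 : (G.induce TC).Reachable ⟨us, Or.inl husC⟩ ⟨ut, Or.inl hutC⟩ :=
    reachable_transfer W hWC
  have e1 : (G.induce TC).Adj ⟨s, hsTC⟩ ⟨us, Or.inl husC⟩ := by
    simp only [comap_adj, Function.Embedding.coe_subtype]
    exact hsadj
  have e2 : (G.induce TC).Adj ⟨t, htTC⟩ ⟨ut, Or.inl hutC⟩ := by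
    simp only [comap_adj, Function.Embedding.coe_subtype]
    exact htadj
  have hreach : (G.induce TC).Reachable ⟨s, hsTC⟩ ⟨t, htTC⟩ :=
    (e1.reachable.trans r1).trans e2.reachable.symm
  have hexW : ∃ ℓ, ∃ W0 : (G.induce TC).Walk ⟨s, hsTC⟩ ⟨t, htTC⟩, W0.length = ℓ :=
    ⟨hreach.some.length, hreach.some, rfl⟩
  obtain ⟨W0, hW0⟩ := Nat.find_spec hexW
  have hmin0 : ∀ Q : (G.induce TC).Walk ⟨s, hsTC⟩ ⟨t, htTC⟩, Nat.find hexW ≤ Q.length := by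
    intro Q
    by_contra h
    push_neg at h
    exact Nat.find_min hexW h ⟨Q, rfl⟩
  have hP0path : W0.bypass.IsPath := Walk.bypass_isPath W0
  have hminP : ∀ Q : (G.induce TC).Walk ⟨s, hsTC⟩ ⟨t, htTC⟩, W0.bypass.length ≤ Q.length := by
    intro Q
    calc W0.bypass.length ≤ W0.length := Walk.length_bypass_le W0
    _ = Nat.find hexW := hW0
    _ ≤ Q.length := hmin0 Q
  have h2 : 2 ≤ W0.bypass.length := by
    have h0 : W0.bypass.length ≠ 0 := by
      intro h
      exact hst (congrArg Subtype.val (Walk.eq_of_length_eq_zero h))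
    have h1 : W0.bypass.length ≠ 1 := by
      intro h
      have hE := edge_of_length_one W0.bypass h
      have hadj : (G.induce TC).Adj ⟨s, hsTC⟩ ⟨t, htTC⟩ := W0.bypass.edges_subset_edgeSet hE
      exact hnadj hadj
    omega
  refine ⟨W0.bypass.map (Embedding.induce TC).toHom, ?_, ?_, ?_, ?_⟩
  · exact Walk.map_isPath_of_injective Subtype.val_injective hP0path
  · show 2 ≤ (W0.bypass.map (Embedding.induce TC).toHom).length
    rwa [Walk.length_map]
  · intro v hv
    replace hv : v ∈ (W0.bypass.map (Embedding.induce TC).toHom).support := hv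
    rw [Walk.support_map, List.mem_map] at hv
    obtain ⟨z, hz, rfl⟩ := hv
    rcases z.2 with h | h
    · exact Or.inl h
    · rcases h with h | h
      · exact Or.inr (Or.inl h)
      · exact Or.inr (Or.inr h)
  · intro x y hx hy hadj
    replace hx : x ∈ (W0.bypass.map (Embedding.induce TC).toHom).support := hx
    replace hy : y ∈ (W0.bypass.map (Embedding.induce TC).toHom).support := hy
    rw [Walk.support_map, List.mem_map] at hx hy
    obtain ⟨x', hx', rfl⟩ := hx
    obtain ⟨y', hy', rfl⟩ := hy
    have hadj' : (G.induce TC).Adj x' y' := by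
      simp only [comap_adj, Function.Embedding.coe_subtype]
      exact hadj
    have hmem := min_walk_edge W0.bypass hminP hx' hy' hadj'
    show _ ∈ (W0.bypass.map (Embedding.induce TC).toHom).edges
    rw [Walk.edges_map, List.mem_map]
    exact ⟨s(x', y'), hmem, by simp⟩

set_option maxHeartbeats 2000000 in

lemma dirac_chordal_aux (n : ℕ) : ∀ (V : Type u) [Fintype V] (G : SimpleGraph V),
    Fintype.card V ≤ n → IsChordal G →
    (∀ u v : V, u ≠ v → G.Adj u v) ∨
    ∃ u v : V, u ≠ v ∧ ¬ G.Adj u v ∧ IsSimplicial G u ∧ IsSimplicial G v := by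
  induction n using Nat.strong_induction_on with
  | _ n ih =>
  intro V _inst G hcard hch
  classical
  by_cases hcomp : ∀ u v : V, u ≠ v → G.Adj u v
  · exact Or.inl hcomp
  right
  push_neg at hcomp
  obtain ⟨a, b, hab_ne, hab_nadj⟩ := hcomp
  set Sep : Finset V → Prop := fun S =>
    ∃ (ha : a ∉ S) (hb : b ∉ S),
      ¬ (G.induce {v : V | v ∉ S}).Reachable ⟨a, ha⟩ ⟨b, hb⟩ with hSepdef
  have hex : ∃ S : Finset V, Sep S := by
    have haI : a ∉ Finset.univ \ ({a, b} : Finset V) := by simp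
    have hbI : b ∉ Finset.univ \ ({a, b} : Finset V) := by simp
    refine ⟨Finset.univ \ ({a, b} : Finset V), haI, hbI, ?_⟩
    intro hr
    have hno : ∀ x y : ↥{v : V | v ∉ Finset.univ \ ({a, b} : Finset V)},
        ¬ (G.induce {v : V | v ∉ Finset.univ \ ({a, b} : Finset V)}).Adj x y := by
      intro x y hadj
      have hx : (x : V) = a ∨ (x : V) = b := by
        have := x.2; simp only [Set.mem_setOf_eq, Finset.mem_sdiff, Finset.mem_univ,
          true_and, not_not, Finset.mem_insert, Finset.mem_singleton] at this
        exact this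
      have hy : (y : V) = a ∨ (y : V) = b := by
        have := y.2; simp only [Set.mem_setOf_eq, Finset.mem_sdiff, Finset.mem_univ,
          true_and, not_not, Finset.mem_insert, Finset.mem_singleton] at this
        exact this
      have hGadj : G.Adj (x : V) (y : V) := hadj
      rcases hx with h | h <;> rcases hy with h' | h' <;> rw [h, h'] at hGadj
      · exact hGadj.ne rfl
      · exact hab_nadj hGadj
      · exact hab_nadj hGadj.symm
      · exact hGadj.ne rfl
    have := eq_of_reachable_of_no_adj hno hr
    exact hab_ne (congrArg Subtype.val this)
  -- minimal separator
  obtain ⟨S, hSsep, hSmin⟩ : ∃ S : Finset V, Sep S ∧ ∀ S' : Finset V, Sep S' → S.card ≤ S'.card := by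
    obtain ⟨S₀, hS₀⟩ := hex
    obtain ⟨S, hS1, hS2⟩ := Finset.exists_min_image (Finset.univ.filter Sep) Finset.card
      ⟨S₀, by simp [hS₀]⟩
    refine ⟨S, by simpa using hS1, fun S' hS' => hS2 S' (by simp [hS'])⟩
  obtain ⟨haS, hbS, hsep⟩ := hSsep
  set T : Set V := {v : V | v ∉ S} with hT
  have haT : a ∈ T := haS
  have hbT : b ∈ T := hbS
  set A : Set V := {v : V | ∃ h : v ∈ T, (G.induce T).Reachable ⟨a, haT⟩ ⟨v, h⟩} with hA
  set B : Set V := {v : V | ∃ h : v ∈ T, (G.induce T).Reachable ⟨b, hbT⟩ ⟨v, h⟩} with hB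
  have haA : a ∈ A := ⟨haT, Reachable.refl _⟩
  have hbB : b ∈ B := ⟨hbT, Reachable.refl _⟩
  have hAT : ∀ v ∈ A, v ∈ T := fun v hv => hv.1
  have hBT : ∀ v ∈ B, v ∈ T := fun v hv => hv.1
  have hAB : ∀ v, v ∈ A → v ∈ B → False := by
    rintro v ⟨h1, r1⟩ ⟨h2, r2⟩
    exact hsep (r1.trans r2.symm)
  have hAclosed : ∀ v ∈ A, ∀ w, G.Adj v w → w ∈ T → w ∈ A := by
    rintro v ⟨hvT, r⟩ w hadj hwT
    refine ⟨hwT, r.trans (Adj.reachable ?_)⟩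
    simp only [comap_adj, Function.Embedding.coe_subtype]
    exact hadj
  have hBclosed : ∀ v ∈ B, ∀ w, G.Adj v w → w ∈ T → w ∈ B := by
    rintro v ⟨hvT, r⟩ w hadj hwT
    refine ⟨hwT, r.trans (Adj.reachable ?_)⟩
    simp only [comap_adj, Function.Embedding.coe_subtype]
    exact hadj
  -- every separator vertex has a neighbor in each of A and B
  have hreach_ins : ∀ s ∈ S, (G.induce (insert s T)).Reachable
      ⟨a, Set.mem_insert_of_mem _ haT⟩ ⟨b, Set.mem_insert_of_mem _ hbT⟩ := by
    intro s hs
    have hlt : (S.erase s).card < S.card := Finset.card_erase_lt_of_mem hs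
    have hnsep : ¬ Sep (S.erase s) := fun h => absurd (hSmin _ h) (by omega)
    simp only [hSepdef] at hnsep
    push_neg at hnsep
    have ha' : a ∉ S.erase s := fun h => haS (Finset.mem_of_mem_erase h)
    have hb' : b ∉ S.erase s := fun h => hbS (Finset.mem_of_mem_erase h)
    obtain ⟨W⟩ := hnsep ha' hb'
    have hsub : ∀ z ∈ W.support, (z : V) ∈ insert s T := by
      intro z hz
      by_cases h : (z : V) = s
      · rw [h]; exact Set.mem_insert _ _
      · exact Set.mem_insert_of_mem _ (fun hzS => z.2 (Finset.mem_erase.mpr ⟨h, hzS⟩))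
    exact reachable_transfer W hsub
  have nbrA : ∀ s ∈ S, ∃ u, u ∈ A ∧ G.Adj s u := by
    intro s hs
    obtain ⟨W⟩ := hreach_ins s hs
    rcases walk_first_exit W haT with ⟨hy, r⟩ | ⟨u, hu, hadj, r⟩
    · exact absurd r hsep
    · exact ⟨u, ⟨hu, r⟩, hadj⟩
  have nbrB : ∀ s ∈ S, ∃ u, u ∈ B ∧ G.Adj s u := by
    intro s hs
    obtain ⟨W⟩ := (hreach_ins s hs).symm
    rcases walk_first_exit W hbT with ⟨hy, r⟩ | ⟨u, hu, hadj, r⟩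
    · exact absurd r.symm hsep
    · exact ⟨u, ⟨hu, r⟩, hadj⟩
  -- S is a clique
  have hSclique : ∀ s t : V, s ∈ S → t ∈ S → s ≠ t → G.Adj s t := by
    intro s t hsS htS hst
    by_contra hnadj
    have compA : ∀ (u : V) (hu : u ∈ A) (v : V) (hvT : v ∈ T),
        (G.induce T).Reachable ⟨u, hAT u hu⟩ ⟨v, hvT⟩ → v ∈ A := by
      intro u hu v hvT r
      exact ⟨hvT, hu.2.trans r⟩
    have connA : ∀ (u v : V) (hu : u ∈ A) (hv : v ∈ A),
        (G.induce T).Reachable ⟨u, hAT u hu⟩ ⟨v, hAT v hv⟩ := by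
      intro u v hu hv
      exact hu.2.symm.trans hv.2
    have compB : ∀ (u : V) (hu : u ∈ B) (v : V) (hvT : v ∈ T),
        (G.induce T).Reachable ⟨u, hBT u hu⟩ ⟨v, hvT⟩ → v ∈ B := by
      intro u hu v hvT r
      exact ⟨hvT, hu.2.trans r⟩
    have connB : ∀ (u v : V) (hu : u ∈ B) (hv : v ∈ B),
        (G.induce T).Reachable ⟨u, hBT u hu⟩ ⟨v, hBT v hv⟩ := by
      intro u v hu hv
      exact hu.2.symm.trans hv.2
    obtain ⟨P, hPpath, hPlen, hPsupp, hPchord⟩ :=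
      side_path hAT compA connA hst hnadj (nbrA s hsS) (nbrA t htS)
    obtain ⟨Q, hQpath, hQlen, hQsupp, hQchord⟩ :=
      side_path hBT compB connB hst hnadj (nbrB s hsS) (nbrB t htS)
    have hdisj : ∀ v, v ∈ P.support → v ∈ Q.support → v = s ∨ v = t := by
      intro v hvP hvQ
      rcases hPsupp v hvP with h | h
      · rcases hQsupp v hvQ with h' | h'
        · exact (hAB v h h').elim
        · exact h'
      · exact h
    have hcyc := cycle_of_two_paths hnadj P Q hPpath hQpath hdisj hPlen hQlen
    have hlen4 : 4 ≤ (P.append Q.reverse).length := by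
      rw [Walk.length_append, Walk.length_reverse]
      omega
    obtain ⟨x, y, hxy, hxs, hys, hne⟩ := hch s (P.append Q.reverse) hcyc hlen4
    rw [Walk.mem_support_append_iff, Walk.support_reverse, List.mem_reverse] at hxs hys
    have hneP : s(x, y) ∉ P.edges := fun h => hne (by
      rw [Walk.edges_append]
      exact List.mem_append_left _ h)
    have hneQ : s(x, y) ∉ Q.edges := fun h => hne (by
      rw [Walk.edges_append]
      refine List.mem_append_right _ ?_
      rw [Walk.edges_reverse, List.mem_reverse]
      exact h)
    rcases hxs with hxP | hxQ <;> rcases hys with hyP | hyQ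
    · exact hneP (hPchord x y hxP hyP hxy)
    · rcases hPsupp x hxP with hxA | hxst
      · rcases hQsupp y hyQ with hyB | hyst
        · exact hAB y (hAclosed x hxA y hxy (hBT y hyB)) hyB
        · have hyP' : y ∈ P.support := by
            rcases hyst with rfl | rfl
            exacts [P.start_mem_support, P.end_mem_support]
          exact hneP (hPchord x y hxP hyP' hxy)
      · have hxQ' : x ∈ Q.support := by
          rcases hxst with rfl | rfl
          exacts [Q.start_mem_support, Q.end_mem_support]
        exact hneQ (hQchord x y hxQ' hyQ hxy)
    · rcases hPsupp y hyP with hyA | hyst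
      · rcases hQsupp x hxQ with hxB | hxst
        · exact hAB x (hAclosed y hyA x hxy.symm (hBT x hxB)) hxB
        · have hxP' : x ∈ P.support := by
            rcases hxst with rfl | rfl
            exacts [P.start_mem_support, P.end_mem_support]
          exact hneP (hPchord x y hxP' hyP hxy)
      · have hyQ' : y ∈ Q.support := by
          rcases hyst with rfl | rfl
          exacts [Q.start_mem_support, Q.end_mem_support]
        exact hneQ (hQchord x y hxQ hyQ' hxy)
    · exact hneQ (hQchord x y hxQ hyQ hxy)
  -- find a simplicial vertex inside a closed component
  have key : ∀ (c : V) (C : Set V), c ∈ C → (∀ v ∈ C, v ∈ T) →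
      (∀ v ∈ C, ∀ w, G.Adj v w → w ∈ T → w ∈ C) →
      (∃ x : V, x ∉ C ∧ x ∈ T) →
      ∃ u ∈ C, IsSimplicial G u := by
    rintro c C hcC hCT hCcl ⟨x0, hx0C, hx0T⟩
    set TC : Set V := C ∪ {v : V | v ∈ S} with hTC
    have hmemTC : ∀ v, v ∈ TC ↔ v ∈ C ∨ v ∈ S := fun v => Set.mem_union _ _ _
    have hx0TC : x0 ∉ TC := by
      rw [hmemTC]
      rintro (h | h)
      · exact hx0C h
      · exact hx0T h
    have hcardlt : Fintype.card ↥TC < Fintype.card V := by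
      refine Fintype.card_lt_of_injective_of_notMem (Subtype.val) Subtype.val_injective
        (b := x0) ?_
      rintro ⟨⟨z, hz⟩, rfl⟩
      exact hx0TC hz
    have hchord' := chordal_induce hch TC
    have hclosure : ∀ u0 : V, u0 ∈ C → ∀ w, G.Adj u0 w → w ∈ TC := by
      intro u0 hu0 w hadj
      by_cases hwS : w ∈ S
      · exact (hmemTC w).mpr (Or.inr hwS)
      · exact (hmemTC w).mpr (Or.inl (hCcl u0 hu0 w hadj hwS))
    rcases ih (Fintype.card ↥TC) (lt_of_lt_of_le hcardlt hcard) ↥TC (G.induce TC) le_rfl hchord'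
      with hfull | ⟨u, v, huv, hnadj', hsu, hsv⟩
    · refine ⟨c, hcC, simplicial_lift ((hmemTC c).mpr (Or.inl hcC)) (hclosure c hcC) ?_⟩
      exact fun x hx y hy hxy => hfull x y hxy
    · have hpick : ∃ w : ↥TC, (↑w : V) ∈ C ∧ IsSimplicial (G.induce TC) w := by
        have hone : (↑u : V) ∉ S ∨ (↑v : V) ∉ S := by
          by_contra hcon
          push_neg at hcon
          refine hnadj' ?_
          have hGuv : G.Adj ↑u ↑v := hSclique ↑u ↑v hcon.1 hcon.2 (fun h => huv (Subtype.ext h))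
          exact hGuv
        rcases hone with h | h
        · refine ⟨u, ?_, hsu⟩
          rcases (hmemTC ↑u).mp u.2 with h' | h'
          exacts [h', absurd h' h]
        · refine ⟨v, ?_, hsv⟩
          rcases (hmemTC ↑v).mp v.2 with h' | h'
          exacts [h', absurd h' h]
      obtain ⟨w, hwC, hws⟩ := hpick
      exact ⟨↑w, hwC, simplicial_lift w.2 (hclosure ↑w hwC) hws⟩
  obtain ⟨uA, huA, hsimpA⟩ := key a A haA hAT hAclosed ⟨b, fun h => hAB b h hbB, hbT⟩
  obtain ⟨uB, huB, hsimpB⟩ := key b B hbB hBT hBclosed ⟨a, fun h => hAB a haA h, haT⟩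
  refine ⟨uA, uB, ?_, ?_, hsimpA, hsimpB⟩
  · intro h; exact hAB uA huA (h ▸ huB)
  · intro hadj; exact hAB uB (hAclosed uA huA uB hadj (hBT _ huB)) huB

end ChordalAux

/-- every (finite) chordal graph that is not a clique contains two
non-adjacent simplicial vertices. -/
theorem chordal_two_simplicial {V : Type*} [Fintype V] (G : SimpleGraph V)
    (hch : IsChordal G) (hnc : ¬ ∀ u v : V, u ≠ v → G.Adj u v) :
    ∃ u v : V, u ≠ v ∧ ¬ G.Adj u v ∧ IsSimplicial G u ∧ IsSimplicial G v := by
  rcases dirac_chordal_aux (Fintype.card V) V G le_rfl hch with h | h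
  · exact absurd h hnc
  · exact h

end
end

section
/- Let C ⊆ 2^[n] be inductively pierced and suppose G(C) contains a clique on a set S of k+1 vertices. Then the restriction of C to S is the full power set: {c ∩ S : c ∈ C} = 2^S. -/
open MvPolynomial

noncomputable section

namespace Aux16

variable {n : ℕ}

/-- The pseudo-monomial with positive part `σ` and negative part `τ`. -/
def pm (σ τ : Finset (Fin n)) : PM n := (∏ i ∈ σ, X i) * ∏ j ∈ τ, (1 - X j)

/-- "The region `[σ,τ]` is empty": no codeword contains `σ` and avoids `τ`. -/
def Z (C : Set (Finset (Fin n))) (σ τ : Finset (Fin n)) : Prop :=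
  ∀ c ∈ C, ¬(σ ⊆ c ∧ ∀ j ∈ τ, j ∉ c)

lemma eval_pm (c σ τ : Finset (Fin n)) :
    MvPolynomial.eval (fun i => if i ∈ c then (1 : ZMod 2) else 0) (pm σ τ)
      = if σ ⊆ c ∧ ∀ j ∈ τ, j ∉ c then 1 else 0 := by
  classical
  unfold pm
  rw [map_mul, map_prod, map_prod]
  have e1 : (∏ i ∈ σ, MvPolynomial.eval (fun i => if i ∈ c then (1 : ZMod 2) else 0) (X i))
      = if ∀ i ∈ σ, i ∈ c then 1 else 0 := by
    simp only [eval_X]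
    rw [Finset.prod_boole]
    congr
  have e2 : (∏ j ∈ τ, MvPolynomial.eval (fun i => if i ∈ c then (1 : ZMod 2) else 0) (1 - X j))
      = if ∀ j ∈ τ, j ∉ c then 1 else 0 := by
    have hterm : ∀ j ∈ τ, MvPolynomial.eval (fun i => if i ∈ c then (1 : ZMod 2) else 0) (1 - X j)
        = if j ∉ c then (1 : ZMod 2) else 0 := by
      intro j _
      by_cases h : j ∈ c <;> simp [h]
    rw [Finset.prod_congr rfl hterm, Finset.prod_boole]
    congr
  rw [e1, e2]
  have hsub : (σ ⊆ c) ↔ (∀ i ∈ σ, i ∈ c) := Finset.subset_iff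
  by_cases h1 : ∀ i ∈ σ, i ∈ c
  · by_cases h2 : ∀ j ∈ τ, j ∉ c
    · rw [if_pos h1, if_pos h2, if_pos ⟨hsub.mpr h1, h2⟩, one_mul]
    · rw [if_neg h2, mul_zero, if_neg (fun h => h2 h.2)]
  · rw [if_neg h1, zero_mul, if_neg (fun h => h1 (fun i hi => h.1 hi))]

lemma rho_eq (σ : Finset (Fin n)) : rho σ = pm σ σᶜ := rfl

lemma eval_rho (c σ : Finset (Fin n)) :
    MvPolynomial.eval (fun i => if i ∈ c then (1 : ZMod 2) else 0) (rho σ)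
      = if σ = c then 1 else 0 := by
  rw [rho_eq, eval_pm]
  congr 1
  simp only [eq_iff_iff, Finset.mem_compl]
  constructor
  · rintro ⟨h1, h2⟩
    exact Finset.Subset.antisymm h1 (fun x hx => by_contra fun hxσ => h2 x hxσ hx)
  · rintro rfl
    exact ⟨Finset.Subset.refl _, fun j hj hjc => hj hjc⟩

lemma eval_zero_of_mem {C : Set (Finset (Fin n))} {c : Finset (Fin n)} (hc : c ∈ C)
    {p : PM n} (hp : p ∈ neuralIdeal C) :
    MvPolynomial.eval (fun i => if i ∈ c then (1 : ZMod 2) else 0) p = 0 := by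
  have : neuralIdeal C ≤ RingHom.ker (MvPolynomial.eval (fun i => if i ∈ c then (1 : ZMod 2) else 0)) := by
    rw [neuralIdeal, Ideal.span_le]
    rintro f ⟨σ, hσ, rfl⟩
    have : σ ≠ c := fun h => hσ (h ▸ hc)
    simp [RingHom.mem_ker, eval_rho, this]
  exact this hp

lemma Z_of_mem {C : Set (Finset (Fin n))} {σ τ : Finset (Fin n)}
    (hp : pm σ τ ∈ neuralIdeal C) : Z C σ τ := by
  intro c hc h
  have h0 := eval_zero_of_mem hc hp
  rw [eval_pm, if_pos h] at h0
  exact one_ne_zero h0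

lemma mem_of_Z {C : Set (Finset (Fin n))} {σ τ : Finset (Fin n)}
    (hd : Disjoint σ τ) (hz : Z C σ τ) : pm σ τ ∈ neuralIdeal C := by
  classical
  set U : Finset (Fin n) := (σ ∪ τ)ᶜ with hU
  have hσU : Disjoint σ U := by
    rw [Finset.disjoint_left]
    intro a ha haU
    rw [hU, Finset.mem_compl] at haU
    exact haU (Finset.mem_union_left _ ha)
  have hτU : Disjoint τ U := by
    rw [Finset.disjoint_left]
    intro a ha haU
    rw [hU, Finset.mem_compl] at haU
    exact haU (Finset.mem_union_right _ ha)
  have key : pm σ τ = ∑ t ∈ U.powerset, rho (σ ∪ t) := by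
    have h1 : (1 : PM n) = ∑ t ∈ U.powerset, (∏ i ∈ t, X i) * ∏ j ∈ U \ t, (1 - X j) := by
      rw [← Finset.prod_add]
      rw [Finset.prod_congr rfl (fun i _ => by ring : ∀ i ∈ U, (X i + (1 - X i) : PM n) = 1)]
      exact (Finset.prod_const_one).symm
    calc pm σ τ = pm σ τ * 1 := (mul_one _).symm
      _ = ∑ t ∈ U.powerset, pm σ τ * ((∏ i ∈ t, X i) * ∏ j ∈ U \ t, (1 - X j)) := by
          rw [← Finset.mul_sum, ← h1]
      _ = ∑ t ∈ U.powerset, rho (σ ∪ t) := by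
          apply Finset.sum_congr rfl
          intro t ht
          rw [Finset.mem_powerset] at ht
          have hσt : Disjoint σ t := hσU.mono_right ht
          have hτUt : Disjoint τ (U \ t) := hτU.mono_right (Finset.sdiff_subset)
          have hxUiff : ∀ x : Fin n, x ∈ U ↔ (x ∉ σ ∧ x ∉ τ) := fun x => by
            rw [hU, Finset.mem_compl, Finset.mem_union]; push_neg; rfl
          have hcompl : (σ ∪ t)ᶜ = τ ∪ (U \ t) := by
            ext x
            have hA : x ∈ t → x ∉ σ ∧ x ∉ τ := fun h => (hxUiff x).mp (ht h)
            have hB : x ∈ σ → x ∉ τ := fun h h' => Finset.disjoint_left.mp hd h h'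
            simp only [Finset.mem_compl, Finset.mem_union, Finset.mem_sdiff, hxUiff]
            tauto
          rw [rho_eq, pm, pm, hcompl, Finset.prod_union hσt, Finset.prod_union hτUt]
          ring
  rw [key]
  apply Ideal.sum_mem
  intro t ht
  rw [Finset.mem_powerset] at ht
  apply Ideal.subset_span
  refine ⟨σ ∪ t, ?_, rfl⟩
  intro hmem
  refine hz _ hmem ⟨Finset.subset_union_left, ?_⟩
  intro j hj
  rw [Finset.mem_union]
  push_neg
  exact ⟨Finset.disjoint_right.mp hd hj, fun hjt => Finset.disjoint_left.mp hτU hj (ht hjt)⟩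

lemma dvd_one_cases {x : ZMod 2} {P : Prop} [Decidable P]
    (hx : x = if P then 1 else 0) (h : x ∣ 1) : P := by
  by_contra hP
  rw [if_neg hP] at hx
  subst hx
  have := isUnit_of_dvd_one h
  simpa using this

lemma dvd_subset {σ₁ τ₁ σ₂ τ₂ : Finset (Fin n)} (hd : Disjoint σ₁ τ₁)
    (hdvd : pm σ₂ τ₂ ∣ pm σ₁ τ₁) : σ₂ ⊆ σ₁ ∧ τ₂ ⊆ τ₁ := by
  classical
  have key : ∀ c : Finset (Fin n), (σ₁ ⊆ c ∧ ∀ j ∈ τ₁, j ∉ c) →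
      σ₂ ⊆ c ∧ ∀ j ∈ τ₂, j ∉ c := by
    intro c hc
    have h1 : MvPolynomial.eval (fun i => if i ∈ c then (1 : ZMod 2) else 0) (pm σ₁ τ₁) = 1 := by
      rw [eval_pm, if_pos hc]
    have h2 := map_dvd (MvPolynomial.eval (fun i => if i ∈ c then (1 : ZMod 2) else 0)) hdvd
    rw [h1] at h2
    exact dvd_one_cases (eval_pm c σ₂ τ₂) h2
  have base := key σ₁ ⟨Finset.Subset.refl _, fun j hj hjc => Finset.disjoint_left.mp hd hjc hj⟩
  refine ⟨base.1, ?_⟩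
  intro b hb
  by_contra hbτ₁
  have h := key (insert b σ₁) ⟨Finset.subset_insert _ _, ?_⟩
  · exact h.2 b hb (Finset.mem_insert_self _ _)
  · intro j hj hjmem
    rcases Finset.mem_insert.mp hjmem with rfl | hjσ
    · exact hbτ₁ hj
    · exact Finset.disjoint_left.mp hd hjσ hj

lemma mem_vars_of_eval_ne {p : PM n} {f g : Fin n → ZMod 2} (a : Fin n)
    (hfg : ∀ i, i ≠ a → f i = g i)
    (hne : MvPolynomial.eval f p ≠ MvPolynomial.eval g p) : a ∈ p.vars := by
  by_contra ha
  apply hne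
  exact eval₂Hom_congr' rfl (fun i hi _ => hfg i (fun h => ha (h ▸ hi))) rfl

lemma vars_pm {σ τ : Finset (Fin n)} (hd : Disjoint σ τ) : (pm σ τ).vars = σ ∪ τ := by
  classical
  apply Finset.Subset.antisymm
  · refine (vars_mul _ _).trans (Finset.union_subset_union ?_ ?_)
    · refine (vars_prod _).trans (Finset.biUnion_subset.mpr fun i hi => ?_)
      rw [vars_X]
      exact Finset.singleton_subset_iff.mpr hi
    · refine (vars_prod _).trans (Finset.biUnion_subset.mpr fun j hj => ?_)
      refine (vars_sub_subset _).trans ?_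
      rw [vars_one, vars_X]
      simp [Finset.singleton_subset_iff.mpr hj]
  · intro a ha
    rcases Finset.mem_union.mp ha with haσ | haτ
    · refine mem_vars_of_eval_ne (f := fun i => if i ∈ σ then 1 else 0)
        (g := fun i => if i ∈ σ.erase a then 1 else 0) a (fun i hia => ?_) ?_
      · simp [Finset.mem_erase, hia]
      · rw [eval_pm, eval_pm]
        rw [if_pos ⟨Finset.Subset.refl _, fun j hj hjσ => Finset.disjoint_left.mp hd hjσ hj⟩,
          if_neg (fun h => Finset.notMem_erase a σ (h.1 haσ))]
        simp
    · refine mem_vars_of_eval_ne (f := fun i => if i ∈ σ then 1 else 0)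
        (g := fun i => if i ∈ insert a σ then 1 else 0) a (fun i hia => ?_) ?_
      · simp [Finset.mem_insert, hia]
      · rw [eval_pm, eval_pm]
        rw [if_pos ⟨Finset.Subset.refl _, fun j hj hjσ => Finset.disjoint_left.mp hd hjσ hj⟩,
          if_neg (fun h => h.2 a haτ (Finset.mem_insert_self a σ))]
        simp

lemma notZ_small {C : Set (Finset (Fin n))} (hgood : GoodCode C) {σ τ : Finset (Fin n)}
    (h : σ.card + τ.card ≤ 1) : ¬Z C σ τ := by
  intro hz
  rcases Finset.eq_empty_or_nonempty σ with rfl | ⟨x, hx⟩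
  · exact hz ∅ hgood.1 ⟨Finset.empty_subset _, fun j _ hj => Finset.notMem_empty j hj⟩
  · have hσ1 : σ.card = 1 := le_antisymm (by omega) (Finset.card_pos.mpr ⟨x, hx⟩)
    have hσ : σ = {x} := by
      obtain ⟨y, hy⟩ := Finset.card_eq_one.mp hσ1
      rw [hy] at hx ⊢
      rw [Finset.mem_singleton.mp hx]
    have hτ : τ = ∅ := Finset.card_eq_zero.mp (by omega)
    obtain ⟨c, hcC, hxc⟩ := hgood.2.1 x
    subst hσ hτ
    exact hz c hcC ⟨Finset.singleton_subset_iff.mpr hxc, fun j hj => absurd hj (Finset.notMem_empty j)⟩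

lemma pm_mem_CF {C : Set (Finset (Fin n))} (hgood : GoodCode C) {σ' τ' : Finset (Fin n)}
    (hd : Disjoint σ' τ') (hcard : σ'.card + τ'.card = 2) (hz : Z C σ' τ') :
    pm σ' τ' ∈ CF C := by
  refine ⟨⟨σ', τ', hd, rfl⟩, mem_of_Z hd hz, ?_⟩
  rintro g ⟨σ₂, τ₂, hd₂, rfl⟩ hgI hgdvd
  obtain ⟨hs, ht⟩ := dvd_subset hd hgdvd
  have hz₂ : Z C σ₂ τ₂ := Z_of_mem hgI
  have h1 : σ₂.card ≤ σ'.card := Finset.card_le_card hs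
  have h2 : τ₂.card ≤ τ'.card := Finset.card_le_card ht
  have hc2 : σ₂.card + τ₂.card = 2 := by
    by_contra hne
    exact notZ_small hgood (by omega) hz₂
  have e1 : σ₂ = σ' := Finset.eq_of_subset_of_card_le hs (by omega)
  have e2 : τ₂ = τ' := Finset.eq_of_subset_of_card_le ht (by omega)
  rw [e1, e2]
  rfl

lemma key {k : ℕ} {C : Set (Finset (Fin n))} (h : InductivelyPierced k C) :
    ∀ σ τ : Finset (Fin n), Disjoint σ τ → Z C σ τ →
      ∃ σ' τ' : Finset (Fin n), σ' ⊆ σ ∧ τ' ⊆ τ ∧ σ'.card + τ'.card ≤ 2 ∧ Z C σ' τ' := by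
  induction h with
  | empty =>
    intro σ τ hd hz
    have hσ : σ.Nonempty := by
      rcases Finset.eq_empty_or_nonempty σ with rfl | h
      · exact absurd ⟨Finset.empty_subset _, fun j _ hj => Finset.notMem_empty j hj⟩
          (hz ∅ (Set.mem_singleton _))
      · exact h
    obtain ⟨a, ha⟩ := hσ
    refine ⟨{a}, ∅, Finset.singleton_subset_iff.mpr ha, Finset.empty_subset _, by simp, ?_⟩
    intro c hc hcon
    rw [Set.mem_singleton_iff.mp hc] at hcon
    exact Finset.notMem_empty a (hcon.1 (Finset.mem_singleton_self a))
  | pierce C i k' hk hp hrec ih =>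
    intro σ τ hd hz
    obtain ⟨σ₀, τ₀, hστ₀, hiτ₀, hcard₀, hIcc, hC⟩ := hp
    have hiσ₀ : i ∉ σ₀ := fun h => hiτ₀ (hστ₀ h)
    have hDC : del C i ⊆ C := by
      intro d hd'
      rw [hC]
      exact Or.inl hd'
    have hno_i : ∀ d ∈ del C i, i ∉ d := by
      rintro d ⟨c, hc, rfl⟩
      exact Finset.notMem_erase i c
    have hmem_i : ∀ c ∈ C, i ∈ c → insert i σ₀ ⊆ c ∧ c ⊆ insert i τ₀ := by
      intro c hc hic
      rw [hC] at hc
      rcases hc with hc | hc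
      · exact absurd hic (hno_i c hc)
      · exact hc
    have lift : ∀ σ' τ' : Finset (Fin n), i ∉ σ' → i ∉ τ' →
        Z (del C i) σ' τ' → Z C σ' τ' := by
      intro σ' τ' hiσ' hiτ' hzD c hc hcon
      obtain ⟨hsub, havoid⟩ := hcon
      by_cases hic : i ∈ c
      · obtain ⟨h1, h2⟩ := hmem_i c hc hic
        refine hzD (c.erase i) (hIcc ⟨?_, ?_⟩) ⟨?_, ?_⟩
        · intro x hx
          exact Finset.mem_erase.mpr ⟨fun he => hiτ₀ (he ▸ hστ₀ hx), h1 (Finset.mem_insert_of_mem hx)⟩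
        · intro x hx
          obtain ⟨hxi, hxc⟩ := Finset.mem_erase.mp hx
          rcases Finset.mem_insert.mp (h2 hxc) with h | h
          · exact absurd h hxi
          · exact h
        · intro x hx
          exact Finset.mem_erase.mpr ⟨fun he => hiσ' (he ▸ hx), hsub hx⟩
        · intro j hj hjmem
          exact havoid j hj (Finset.mem_of_mem_erase hjmem)
      · exact hzD c ⟨c, hc, Finset.erase_eq_of_notMem hic⟩ ⟨hsub, havoid⟩
    by_cases hiσ : i ∈ σ
    · have hiτ : i ∉ τ := Finset.disjoint_left.mp hd hiσ
      set σ₁ := σ.erase i with hσ₁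
      have halt : ¬(σ₁ ⊆ τ₀ ∧ ∀ j ∈ τ, j ∉ σ₀) := by
        rintro ⟨h1, h2⟩
        have hγC : insert i (σ₀ ∪ σ₁) ∈ C := by
          rw [hC]
          right
          constructor
          · intro x hx
            rcases Finset.mem_insert.mp hx with rfl | hx
            · exact Finset.mem_insert_self _ _
            · exact Finset.mem_insert_of_mem (Finset.mem_union_left _ hx)
          · intro x hx
            rcases Finset.mem_insert.mp hx with rfl | hx
            · exact Finset.mem_insert_self _ _
            · rcases Finset.mem_union.mp hx with h | h
              · exact Finset.mem_insert_of_mem (hστ₀ h)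
              · exact Finset.mem_insert_of_mem (h1 h)
        refine hz _ hγC ⟨?_, ?_⟩
        · intro x hx
          by_cases hxi : x = i
          · exact hxi ▸ Finset.mem_insert_self _ _
          · exact Finset.mem_insert_of_mem
              (Finset.mem_union_right _ (Finset.mem_erase.mpr ⟨hxi, hx⟩))
        · intro j hj hjmem
          rcases Finset.mem_insert.mp hjmem with rfl | hjmem
          · exact hiτ hj
          · rcases Finset.mem_union.mp hjmem with h | h
            · exact h2 j hj h
            · exact Finset.disjoint_left.mp hd (Finset.mem_of_mem_erase h) hj
      by_cases hA : σ₁ ⊆ τ₀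
      · have hB : ¬∀ j ∈ τ, j ∉ σ₀ := fun h => halt ⟨hA, h⟩
        push_neg at hB
        obtain ⟨j, hjτ, hjσ₀⟩ := hB
        refine ⟨{i}, {j}, Finset.singleton_subset_iff.mpr hiσ,
          Finset.singleton_subset_iff.mpr hjτ, by simp, ?_⟩
        intro c hc hcon
        obtain ⟨hsub, havoid⟩ := hcon
        have hic : i ∈ c := hsub (Finset.mem_singleton_self i)
        exact havoid j (Finset.mem_singleton_self j)
          ((hmem_i c hc hic).1 (Finset.mem_insert_of_mem hjσ₀))
      · obtain ⟨j, hjσ₁, hjτ₀⟩ := Finset.not_subset.mp hA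
        have hji : j ≠ i := (Finset.mem_erase.mp hjσ₁).1
        refine ⟨{i, j}, ∅, ?_, Finset.empty_subset _, ?_, ?_⟩
        · intro x hx
          rcases Finset.mem_insert.mp hx with rfl | hx
          · exact hiσ
          · exact Finset.mem_of_mem_erase (Finset.mem_singleton.mp hx ▸ hjσ₁)
        · simpa using Finset.card_insert_le i {j}
        · intro c hc hcon
          obtain ⟨hsub, _⟩ := hcon
          have hic : i ∈ c := hsub (Finset.mem_insert_self i {j})
          have hjc : j ∈ c := hsub (Finset.mem_insert_of_mem (Finset.mem_singleton_self j))
          rcases Finset.mem_insert.mp ((hmem_i c hc hic).2 hjc) with h | h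
          · exact hji h
          · exact hjτ₀ h
    · set τ₁ := τ.erase i with hτ₁
      have hZD : Z (del C i) σ τ₁ := by
        intro d hd' hcon
        obtain ⟨hsub, havoid⟩ := hcon
        refine hz d (hDC hd') ⟨hsub, ?_⟩
        intro j hjτ hjd
        by_cases hji : j = i
        · exact hno_i d hd' (hji ▸ hjd)
        · exact havoid j (Finset.mem_erase.mpr ⟨hji, hjτ⟩) hjd
      obtain ⟨σ', τ', h1, h2, h3, h4⟩ :=
        ih σ τ₁ (hd.mono_right (Finset.erase_subset _ _)) hZD
      exact ⟨σ', τ', h1, h2.trans (Finset.erase_subset _ _), h3,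
        lift σ' τ' (fun h => hiσ (h1 h)) (fun h => Finset.notMem_erase i τ (h2 h)) h4⟩

end Aux16

/-- if `C` is inductively pierced and `G(C)` has a clique on a set
`S` of `k+1` vertices, then the restriction of `C` to `S` is the full power set. -/
theorem restriction_full {n : ℕ} (C : Set (Finset (Fin n))) (hgood : GoodCode C)
    (hip : ∃ k, InductivelyPierced k C) (k : ℕ) (S : Finset (Fin n))
    (hcard : S.card = k + 1) (hclq : (GRel C).IsClique (S : Set (Fin n))) :
    (fun c => c ∩ S) '' C = {d : Finset (Fin n) | d ⊆ S} := by
  classical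
  obtain ⟨k₀, hip⟩ := hip
  ext d
  simp only [Set.mem_image, Set.mem_setOf_eq]
  constructor
  · rintro ⟨c, hc, rfl⟩
    exact Finset.inter_subset_right
  · intro hdS
    by_contra hne
    push_neg at hne
    have hz : Aux16.Z C d (S \ d) := by
      intro c hc hcon
      obtain ⟨hsub, havoid⟩ := hcon
      refine hne c hc ?_
      ext x
      simp only [Finset.mem_inter]
      constructor
      · rintro ⟨hxc, hxS⟩
        by_contra hxd
        exact havoid x (Finset.mem_sdiff.mpr ⟨hxS, hxd⟩) hxc
      · intro hxd
        exact ⟨hsub hxd, hdS hxd⟩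
    obtain ⟨σ', τ', hsd, htd, hcard2, hz'⟩ :=
      Aux16.key hip d (S \ d) Finset.disjoint_sdiff hz
    have hdisj' : Disjoint σ' τ' := Finset.disjoint_sdiff.mono hsd htd
    have hc2 : σ'.card + τ'.card = 2 := by
      by_contra h
      exact Aux16.notZ_small hgood (by omega) hz'
    have hCF := Aux16.pm_mem_CF hgood hdisj' hc2 hz'
    have hvars := Aux16.vars_pm hdisj'
    have hunion_card : (σ' ∪ τ').card = 2 := by
      rw [Finset.card_union_of_disjoint hdisj']
      exact hc2
    obtain ⟨a, b, hab, hU⟩ := Finset.card_eq_two.mp hunion_card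
    have hUS : σ' ∪ τ' ⊆ S :=
      Finset.union_subset (hsd.trans hdS) (htd.trans (Finset.sdiff_subset))
    have haS : a ∈ S := hUS (hU ▸ Finset.mem_insert_self a {b})
    have hbS : b ∈ S := hUS (hU ▸ Finset.mem_insert_of_mem (Finset.mem_singleton_self b))
    have hadj := hclq (Finset.mem_coe.mpr haS) (Finset.mem_coe.mpr hbS) hab
    exact hadj.2 (Aux16.pm σ' τ') hCF (by rw [hvars, hU])

end
end

section
/- The largest size of a set-theoretically independent collection of open balls in R^d is d+1; in particular, any d+2 open balls in R^d fail to be independent, i.e., if U_1,...,U_{d+2} are open balls in R^d then code({U_1,...,U_{d+2}}) ≠ 2^[d+2]. -/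
open MvPolynomial

noncomputable section

lemma mem_ball_iff_sum {d : ℕ} (p q : EuclideanSpace ℝ (Fin d)) {r : ℝ} (hr : 0 < r) :
    p ∈ Metric.ball q r ↔ ∑ j, (p j - q j)^2 < r^2 := by
  rw [Metric.mem_ball, EuclideanSpace.dist_eq, Real.sqrt_lt' hr]
  simp [Real.dist_eq, sq_abs]


noncomputable def ballsLM {d : ℕ} (x : Fin (d + 2) → EuclideanSpace ℝ (Fin d)) :
    (Fin (d+2) → ℝ) →ₗ[ℝ] (Fin (d+1) → ℝ) where
  toFun lam := fun j => if h : (j:ℕ) < d then ∑ i, lam i * x i ⟨j, h⟩ else ∑ i, lam i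
  map_add' a b := by
    funext j; by_cases h : (j:ℕ) < d <;> simp [h, add_mul, Finset.sum_add_distrib]
  map_smul' c a := by
    funext j; by_cases h : (j:ℕ) < d <;> simp [h, Finset.mul_sum, mul_assoc]


lemma balls_not_indep {d : ℕ} (x : Fin (d + 2) → EuclideanSpace ℝ (Fin d))
    (r : Fin (d + 2) → ℝ) (hr : ∀ i, 0 < r i) :
    codeOf (fun i => Metric.ball (x i) (r i)) ≠ Set.univ := by
  intro hcode
  have hreal : ∀ σ : Finset (Fin (d+2)), ∃ p : EuclideanSpace ℝ (Fin d),
      ∀ i, (∑ j, (p j - x i j)^2 < r i ^ 2) ↔ i ∈ σ := by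
    intro σ
    have : σ ∈ codeOf (fun i => Metric.ball (x i) (r i)) := hcode ▸ Set.mem_univ σ
    obtain ⟨p, hp⟩ := this
    exact ⟨p, fun i => (mem_ball_iff_sum p (x i) (hr i)).symm.trans (hp i)⟩
  -- nontrivial kernel element
  have hni : ¬ Function.Injective (ballsLM x) := by
    intro hinj
    have := LinearMap.finrank_le_finrank_of_injective hinj
    simp [Module.finrank_fin_fun] at this
  obtain ⟨a, b, hab, hne⟩ := Function.not_injective_iff.mp hni
  set μ : Fin (d+2) → ℝ := a - b with hμdef
  have hμ0 : μ ≠ 0 := sub_ne_zero.mpr hne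
  have hTμ : ballsLM x μ = 0 := by rw [map_sub, hab, sub_self]
  have hsum : ∑ i, μ i = 0 := by
    have := congrFun hTμ (Fin.last d)
    simpa [ballsLM, Fin.last, lt_irrefl] using this
  have hcoord : ∀ j : Fin d, ∑ i, μ i * x i j = 0 := by
    intro j
    have := congrFun hTμ j.castSucc
    simpa [ballsLM, j.isLt] using this
  -- the key constant
  have key : ∀ p : EuclideanSpace ℝ (Fin d),
      ∑ i, μ i * ((∑ j, (p j - x i j)^2) - r i ^ 2)
        = ∑ i, μ i * ((∑ j, (x i j)^2) - r i ^ 2) := by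
    intro p
    have expand : ∀ i, ∑ j, (p j - x i j)^2
        = (∑ j, (p j)^2) - 2 * ∑ j, p j * x i j + ∑ j, (x i j)^2 := by
      intro i
      simp_rw [sub_sq]
      rw [Finset.sum_add_distrib, Finset.sum_sub_distrib]
      congr 1
      congr 1
      rw [Finset.mul_sum]
      exact Finset.sum_congr rfl fun j _ => by ring
    simp_rw [expand]
    have h1 : ∑ i, μ i * (∑ j, p j * x i j) = 0 := by
      simp_rw [Finset.mul_sum]
      rw [Finset.sum_comm]
      have hz : ∀ j : Fin d, ∑ i, μ i * (p j * x i j) = 0 := by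
        intro j
        calc ∑ i, μ i * (p j * x i j) = p j * ∑ i, μ i * x i j := by
              rw [Finset.mul_sum]; exact Finset.sum_congr rfl fun i _ => by ring
          _ = 0 := by rw [hcoord j, mul_zero]
      simp [hz]
    have h2 : ∑ i, μ i * (∑ j, (p j)^2) = 0 := by
      rw [← Finset.sum_mul, hsum, zero_mul]
    calc ∑ i, μ i * ((∑ j, (p j)^2) - 2 * ∑ j, p j * x i j + ∑ j, (x i j)^2 - r i ^2)
        = ∑ i, (μ i * (∑ j, (p j)^2) - 2 * (μ i * ∑ j, p j * x i j)
            + μ i * ((∑ j, (x i j)^2) - r i ^2)) := Finset.sum_congr rfl fun i _ => by ring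
      _ = ∑ i, μ i * ((∑ j, (x i j)^2) - r i ^2) := by
          rw [Finset.sum_add_distrib, Finset.sum_sub_distrib, h2, ← Finset.mul_sum, h1]
          ring
  set B : ℝ := ∑ i, μ i * ((∑ j, (x i j)^2) - r i ^ 2) with hB
  -- μ has a positive and a negative entry
  have hex : ∃ i, μ i ≠ 0 := by
    by_contra h
    push_neg at h
    exact hμ0 (funext fun i => h i)
  have hpos : ∃ i, 0 < μ i := by
    by_contra h
    push_neg at h
    obtain ⟨i₀, hi₀⟩ := hex
    have : ∀ i ∈ Finset.univ, (0:ℝ) ≤ -μ i := fun i _ => neg_nonneg.mpr (h i)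
    have hz : ∑ i, -μ i = 0 := by rw [Finset.sum_neg_distrib, hsum, neg_zero]
    have := (Finset.sum_eq_zero_iff_of_nonneg this).mp hz i₀ (Finset.mem_univ i₀)
    exact hi₀ (by linarith [neg_eq_zero.mp this])
  have hneg : ∃ i, μ i < 0 := by
    by_contra h
    push_neg at h
    obtain ⟨i₀, hi₀⟩ := hex
    have : ∀ i ∈ Finset.univ, (0:ℝ) ≤ μ i := fun i _ => h i
    have := (Finset.sum_eq_zero_iff_of_nonneg this).mp hsum i₀ (Finset.mem_univ i₀)
    exact hi₀ this
  -- realize the positive pattern : B < 0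
  obtain ⟨p₁, hp₁⟩ := hreal (Finset.univ.filter fun i => 0 < μ i)
  have hBneg : B < 0 := by
    rw [← key p₁]
    have hterm : ∀ i ∈ Finset.univ, μ i * ((∑ j, (p₁ j - x i j)^2) - r i ^ 2) ≤ 0 := by
      intro i _
      rcases lt_trichotomy (μ i) 0 with h | h | h
      · have : ¬ ((∑ j, (p₁ j - x i j)^2) < r i ^ 2) := by
          intro hc
          have := (hp₁ i).mp hc
          simp at this
          linarith
        exact mul_nonpos_of_nonpos_of_nonneg h.le (by linarith [not_lt.mp this])
      · simp [h]
      · have : (∑ j, (p₁ j - x i j)^2) < r i ^ 2 := (hp₁ i).mpr (by simp [h])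
        exact mul_nonpos_of_nonneg_of_nonpos h.le (by linarith)
    obtain ⟨ipos, hipos⟩ := hpos
    have hstrict : μ ipos * ((∑ j, (p₁ j - x ipos j)^2) - r ipos ^ 2) < 0 := by
      have : (∑ j, (p₁ j - x ipos j)^2) < r ipos ^ 2 := (hp₁ ipos).mpr (by simp [hipos])
      exact mul_neg_of_pos_of_neg hipos (by linarith)
    calc ∑ i, μ i * ((∑ j, (p₁ j - x i j)^2) - r i ^ 2)
        < ∑ i : Fin (d+2), (0:ℝ) := by
          apply Finset.sum_lt_sum hterm ⟨ipos, Finset.mem_univ _, hstrict⟩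
      _ = 0 := by simp
  -- realize the negative pattern : B > 0
  obtain ⟨p₂, hp₂⟩ := hreal (Finset.univ.filter fun i => μ i < 0)
  have hBpos : 0 < B := by
    rw [← key p₂]
    have hterm : ∀ i ∈ Finset.univ, (0:ℝ) ≤ μ i * ((∑ j, (p₂ j - x i j)^2) - r i ^ 2) := by
      intro i _
      rcases lt_trichotomy (μ i) 0 with h | h | h
      · have : (∑ j, (p₂ j - x i j)^2) < r i ^ 2 := (hp₂ i).mpr (by simp [h])
        exact (mul_pos_of_neg_of_neg h (by linarith)).le
      · simp [h]
      · have : ¬ ((∑ j, (p₂ j - x i j)^2) < r i ^ 2) := by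
          intro hc
          have := (hp₂ i).mp hc
          simp at this
          linarith
        exact mul_nonneg h.le (by linarith [not_lt.mp this])
    obtain ⟨ineg, hineg⟩ := hneg
    have hstrict : 0 < μ ineg * ((∑ j, (p₂ j - x ineg j)^2) - r ineg ^ 2) := by
      have : (∑ j, (p₂ j - x ineg j)^2) < r ineg ^ 2 := (hp₂ ineg).mpr (by simp [hineg])
      exact mul_pos_of_neg_of_neg hineg (by linarith)
    calc (0:ℝ) = ∑ i : Fin (d+2), (0:ℝ) := by simp
      _ < ∑ i, μ i * ((∑ j, (p₂ j - x i j)^2) - r i ^ 2) :=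
          Finset.sum_lt_sum hterm ⟨ineg, Finset.mem_univ _, hstrict⟩
  linarith

lemma balls_exist_indep {d : ℕ} (hd : 0 < d) :
    ∃ (x : Fin (d + 1) → EuclideanSpace ℝ (Fin d)) (r : Fin (d + 1) → ℝ),
      (∀ i, 0 < r i) ∧
        codeOf (fun i => Metric.ball (x i) (r i)) = Set.univ := by
  have hd0 : (0:ℝ) < d := by exact_mod_cast hd
  refine ⟨fun i => WithLp.toLp 2 (fun j => if (i:ℕ) = (j:ℕ) then 1 else 0),
    fun i => if (i:ℕ) < d then 1 else Real.sqrt (1/(2*d)), ?_, ?_⟩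
  · intro i
    by_cases h : (i:ℕ) < d
    · simp [h]
    · simp only [h, if_false]
      exact Real.sqrt_pos.mpr (by positivity)
  · apply Set.eq_univ_of_forall
    intro σ
    set a : ℝ := if Fin.last d ∈ σ then 1/(2*(d:ℝ)) else 1/(d:ℝ) with ha_def
    have ha : 0 < a := by
      rw [ha_def]; split <;> positivity
    have hda : (d:ℝ) * a ≤ 1 := by
      rw [ha_def]; split
      · rw [mul_one_div]
        rw [div_le_one (by positivity)]
        linarith
      · rw [mul_one_div, div_self (ne_of_gt hd0)]
    set p : EuclideanSpace ℝ (Fin d) := WithLp.toLp 2 fun j => if (Fin.castSucc j) ∈ σ then a else -a with hp_def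
    have hp2 : ∀ j, (p j)^2 = a^2 := by
      intro j; rw [hp_def]; dsimp only; split <;> ring
    have hsumsq : ∑ j : Fin d, (p j)^2 = d * a^2 := by
      simp [hp2, Finset.sum_const]
    refine ⟨p, fun i => ?_⟩
    by_cases h : (i:ℕ) < d
    · -- coordinate ball
      set j₀ : Fin d := ⟨i, h⟩ with hj₀
      have hij : i = Fin.castSucc j₀ := by
        apply Fin.ext; simp [hj₀]
      have hx : ∀ j : Fin d, (if ((i:ℕ) = (j:ℕ)) then (1:ℝ) else 0) = if j = j₀ then 1 else 0 := by
        intro j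
        by_cases hj : j = j₀
        · subst hj; simp [hj₀]
        · have : (i:ℕ) ≠ (j:ℕ) := by
            intro hc
            exact hj (Fin.ext (by simp [hj₀, hc.symm]))
          simp [this, hj]
      rw [mem_ball_iff_sum _ _ (by simp [h] : (0:ℝ) < if (i:ℕ) < d then 1 else Real.sqrt (1/(2*d)))]
      simp only [h, if_true]
      have hS : ∑ j : Fin d, (p j - if (i:ℕ) = (j:ℕ) then (1:ℝ) else 0)^2
          = d * a^2 - 2 * p j₀ + 1 := by
        have e1 : ∀ j : Fin d, (p j - if (i:ℕ) = (j:ℕ) then (1:ℝ) else 0)^2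
            = a^2 - 2 * (p j * if j = j₀ then 1 else 0) + (if j = j₀ then (1:ℝ) else 0)^2 := by
          intro j
          rw [hx j, sub_sq, hp2 j]; ring
        rw [Finset.sum_congr rfl fun j _ => e1 j]
        rw [Finset.sum_add_distrib, Finset.sum_sub_distrib]
        have e2 : ∑ j : Fin d, (a^2) = d * a^2 := by
          simp [Finset.sum_const, mul_comm]
        have e3 : ∑ j : Fin d, 2 * (p j * if j = j₀ then (1:ℝ) else 0) = 2 * p j₀ := by
          rw [← Finset.mul_sum]
          congr 1
          simp [Finset.sum_ite_eq']
        have e4 : ∑ j : Fin d, (if j = j₀ then (1:ℝ) else 0)^2 = 1 := by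
          simp [ite_pow, Finset.sum_ite_eq']
        rw [e2, e3, e4]
      rw [hS]
      rw [hij]
      constructor
      · intro hlt
        by_contra hns
        have hpj : p j₀ = -a := by rw [hp_def]; simp [hns]
        rw [hpj] at hlt
        nlinarith [sq_nonneg a]
      · intro hin
        have hpj : p j₀ = a := by rw [hp_def]; simp [hin]
        rw [hpj]
        nlinarith
    · -- the origin ball
      have hieq : i = Fin.last d := by
        apply Fin.ext
        have := i.isLt
        simp only [Fin.val_last]
        omega
      have hx0 : ∀ j : Fin d, (if ((i:ℕ) = (j:ℕ)) then (1:ℝ) else 0) = 0 := by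
        intro j
        have : (i:ℕ) ≠ (j:ℕ) := by
          have := j.isLt; omega
        simp [this]
      have hrpos : (0:ℝ) < Real.sqrt (1/(2*d)) := Real.sqrt_pos.mpr (by positivity)
      rw [mem_ball_iff_sum _ _ (by rw [if_neg h]; exact hrpos : (0:ℝ) < if (i:ℕ) < d then 1 else Real.sqrt (1/(2*d)))]
      simp only [h, if_false]
      rw [Real.sq_sqrt (by positivity)]
      have hS : ∑ j : Fin d, (p j - if (i:ℕ) = (j:ℕ) then (1:ℝ) else 0)^2 = d * a^2 := by
        rw [Finset.sum_congr rfl fun j _ => by rw [hx0 j, sub_zero]]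
        exact hsumsq
      rw [hS, hieq]
      by_cases hlast : Fin.last d ∈ σ
      · have haval : a = 1/(2*(d:ℝ)) := by rw [ha_def, if_pos hlast]
        simp only [hlast, iff_true]
        have e : (d:ℝ) * (1/(2*d))^2 = 1/(4*d) := by field_simp; ring
        rw [haval, e, div_lt_div_iff₀ (by positivity) (by positivity)]
        nlinarith
      · have haval : a = 1/(d:ℝ) := by rw [ha_def, if_neg hlast]
        simp only [hlast, iff_false, not_lt]
        have e : (d:ℝ) * (1/d)^2 = 1/d := by field_simp
        rw [haval, e, div_le_div_iff₀ (by positivity) (by positivity)]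
        nlinarith


/-- the largest size of an independent collection of open balls in
`ℝ^d` is `d+1`; in particular any `d+2` open balls fail to be independent. -/
theorem independent_balls_max {d : ℕ} (hd : 0 < d) :
    (∃ (x : Fin (d + 1) → EuclideanSpace ℝ (Fin d)) (r : Fin (d + 1) → ℝ),
      (∀ i, 0 < r i) ∧
        codeOf (fun i => Metric.ball (x i) (r i)) = Set.univ) ∧
    (∀ (x : Fin (d + 2) → EuclideanSpace ℝ (Fin d)) (r : Fin (d + 2) → ℝ),
      (∀ i, 0 < r i) →
        codeOf (fun i => Metric.ball (x i) (r i)) ≠ Set.univ) :=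
  ⟨balls_exist_indep hd, fun x r hr => balls_not_indep x r hr⟩

end
end
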